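/- arXiv:2210.16277 — 7 statements merged into one kernel-verified Lean document; each statement's English description precedes it below -/
import Mathlib

section
/- (Distributed Weighted Off-By-One IQC, Lemma 2.) Let d, N ∈ ℕ and for each k = 1,…,N let J_k : ℝ^d → ℝ be differentiable, m_k-strongly convex with L_k-Lipschitz gradient (0 < m_k ≤ L_k). Let 0 ≤ ρ̄ ≤ ρ ≤ 1 with ρ > 0. Fix reference points s_1,…,s_N ∈ ℝ^d and let y_k : ℕ → ℝ^d be arbitrary sequences. Define for each k and t ∈ ℕ the error quantities ỹ_k^t := y_k^t − s_k and ũ_k^t := ∇J_k(y_k^t) − ∇J_k(s_k), and define the filter states ψ̃_k : ℕ → ℝ^d by ψ̃_k^0 = 0 and ψ̃_k^{t+1} = ũ_k^t − L_k ỹ_k^t. Then for every T ∈ ℕ: Σ_{t=0}^{T} ρ^{−2t} Σ_{k=1}^{N} ⟨ρ̄²·ψ̃_k^t + L_k ỹ_k^t − ũ_k^t, ũ_k^t − m_k ỹ_k^t⟩ ≥ 0. -/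
/-!
Set `ℓ = L − m`, `g = J − (m/2)‖·‖²` and `G = ∇J − m·id`. Strong convexity and the descent
lemma say that the Bregman divergence `D` of `(g, G)` lies between `0` and `(ℓ/2)‖b − a‖²`, which forces cocoercivity
`‖G b − G a‖² ≤ 2ℓ D(a, b)`. Hence `V(p) = ℓ D(s, p) − ½‖G p − G s‖²` is a nonnegative storage
function with `V(yᵗ⁺¹) − ρ̄² V(yᵗ)` bounded by the agent's `(t+1)`-st summand of the IQC, and `V(y⁰)`
by the `0`-th. Weighting by `ρ^{−2t}` and telescoping, using `ρ̄ ≤ ρ`, bounds each agent's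
partial sum below by `ρ^{−2T} V(yᵀ) ≥ 0`.
-/

open scoped RealInnerProductSpace

variable {E : Type*} [NormedAddCommGroup E] [InnerProductSpace ℝ E]

theorem le_add_inner_gradient_add_of_lipschitz_gradient [CompleteSpace E] {f : E → ℝ} {L : ℝ}
    (hf : Differentiable ℝ f) (hL : ∀ a b, ‖gradient f a - gradient f b‖ ≤ L * ‖a - b‖)
    (a b : E) : f b ≤ f a + ⟪gradient f a, b - a⟫ + L / 2 * ‖b - a‖ ^ 2 := by
  set v := b - a
  set h : ℝ → ℝ := fun t => f (a + t • v) - t * ⟪gradient f a, v⟫ - L / 2 * t ^ 2 * ‖v‖ ^ 2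
  have hderiv : ∀ t, HasDerivAt h
      (⟪gradient f (a + t • v), v⟫ - ⟪gradient f a, v⟫ - L * t * ‖v‖ ^ 2) t := by
    intro t
    have hline : HasDerivAt (fun t : ℝ => a + t • v) v t := by
      simpa using ((hasDerivAt_id t).smul_const v).const_add a
    have hcomp := (hf (a + t • v)).hasGradientAt.hasFDerivAt.comp_hasDerivAt t hline
    refine ((hcomp.sub ((hasDerivAt_id t).mul_const ⟪gradient f a, v⟫)).sub
      (((hasDerivAt_pow 2 t).const_mul (L / 2)).mul_const (‖v‖ ^ 2))).congr_deriv ?_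
    simp only [InnerProductSpace.toDual_apply_apply]
    ring
  have hanti : AntitoneOn h (Set.Ici 0) := by
    refine antitoneOn_of_hasDerivWithinAt_nonpos (convex_Ici 0)
      (fun t _ => (hderiv t).continuousAt.continuousWithinAt)
      (fun t _ => (hderiv t).hasDerivWithinAt) fun t ht => sub_nonpos.mpr ?_
    rw [interior_Ici, Set.mem_Ioi] at ht
    calc ⟪gradient f (a + t • v), v⟫ - ⟪gradient f a, v⟫
        = ⟪gradient f (a + t • v) - gradient f a, v⟫ := (inner_sub_left _ _ _).symm
      _ ≤ ‖gradient f (a + t • v) - gradient f a‖ * ‖v‖ := real_inner_le_norm _ _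
      _ ≤ L * ‖(a + t • v) - a‖ * ‖v‖ := by gcongr; exact hL _ _
      _ = L * t * ‖v‖ ^ 2 := by
        rw [add_sub_cancel_left, norm_smul, Real.norm_of_nonneg ht.le]; ring
  have hend := hanti Set.self_mem_Ici (Set.mem_Ici.mpr zero_le_one) zero_le_one
  simp only [h, one_smul, zero_smul, add_zero, zero_mul, one_mul, one_pow, sub_zero, ne_eq,
    OfNat.ofNat_ne_zero, not_false_eq_true, zero_pow, mul_zero] at hend
  rw [add_sub_cancel] at hend
  linarith

noncomputable def bregman (g : E → ℝ) (G : E → E) (a b : E) : ℝ := g b - g a - ⟪G a, b - a⟫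

theorem norm_sub_sq_le_two_mul_bregman {g : E → ℝ} {G : E → E} {ℓ : ℝ} (hℓ : 0 ≤ ℓ)
    (hlow : ∀ a b, 0 ≤ bregman g G a b) (hup : ∀ a b, bregman g G a b ≤ ℓ / 2 * ‖b - a‖ ^ 2)
    (a b : E) : ‖G b - G a‖ ^ 2 ≤ 2 * ℓ * bregman g G a b := by
  set w := G b - G a
  -- Test the two bounds at `b - t • w`: a quadratic in `t` that is nonnegative everywhere.
  have hw : ⟪G b, w⟫ - ⟪G a, w⟫ = ‖w‖ ^ 2 := by
    rw [← inner_sub_left, real_inner_self_eq_norm_sq]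
  have hquad : ∀ t : ℝ, 0 ≤ ℓ / 2 * ‖w‖ ^ 2 * (t * t) + -‖w‖ ^ 2 * t + bregman g G a b := by
    intro t
    have hlow' := hlow a (b - t • w)
    have hup' := hup b (b - t • w)
    simp only [bregman] at hlow' hup' ⊢
    rw [show b - t • w - a = (b - a) - t • w by abel] at hlow'
    rw [sub_sub_cancel_left] at hup'
    simp only [inner_sub_right, inner_neg_right, real_inner_smul_right, norm_neg,
      norm_smul, Real.norm_eq_abs, mul_pow, sq_abs] at hlow' hup' ⊢
    linear_combination hlow' + hup' - t * hw
  have hdiscrim := discrim_le_zero hquad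
  have hB := hlow a b
  rw [discrim] at hdiscrim
  by_contra! hlt
  have hw0 : 0 < ‖w‖ ^ 2 := by nlinarith [mul_nonneg hℓ hB]
  nlinarith [mul_pos hw0 (sub_pos.mpr hlt)]

noncomputable def storage (g : E → ℝ) (G : E → E) (ℓ : ℝ) (s p : E) : ℝ :=
  ℓ * bregman g G s p - ‖G p - G s‖ ^ 2 / 2

section Storage

variable {g : E → ℝ} {G : E → E} {ℓ : ℝ}

@[simp]
theorem storage_self (s : E) : storage g G ℓ s s = 0 := by
  simp [storage, bregman]

theorem storage_nonneg (hℓ : 0 ≤ ℓ) (hlow : ∀ a b, 0 ≤ bregman g G a b)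
    (hup : ∀ a b, bregman g G a b ≤ ℓ / 2 * ‖b - a‖ ^ 2) (s p : E) :
    0 ≤ storage g G ℓ s p := by
  have := norm_sub_sq_le_two_mul_bregman hℓ hlow hup s p
  rw [storage]
  linarith

theorem storage_sub_storage_le (hℓ : 0 ≤ ℓ) (hlow : ∀ a b, 0 ≤ bregman g G a b)
    (hup : ∀ a b, bregman g G a b ≤ ℓ / 2 * ‖b - a‖ ^ 2) (s p q : E) :
    storage g G ℓ s p - storage g G ℓ s q
      ≤ ℓ * ⟪G p - G s, p - q⟫ - ⟪G p - G q, G p - G s⟫ := by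
  have hcoco := norm_sub_sq_le_two_mul_bregman hℓ hlow hup p q
  simp only [storage, bregman, ← real_inner_self_eq_norm_sq, inner_sub_left, inner_sub_right,
    real_inner_comm] at hcoco ⊢
  nlinarith

theorem storage_sub_mul_storage_le (hℓ : 0 ≤ ℓ) (hlow : ∀ a b, 0 ≤ bregman g G a b)
    (hup : ∀ a b, bregman g G a b ≤ ℓ / 2 * ‖b - a‖ ^ 2) {c : ℝ} (hc0 : 0 ≤ c) (hc1 : c ≤ 1)
    (s p q : E) :
    storage g G ℓ s p - c * storage g G ℓ s q
      ≤ ⟪c • ((G q - G s) - ℓ • (q - s)) + ℓ • (p - s) - (G p - G s), G p - G s⟫ := by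
  -- Convex combination of the cases `q = s` (weight `1 - c`) and `q` (weight `c`).
  have hs := storage_sub_storage_le hℓ hlow hup s p s
  have hq := storage_sub_storage_le hℓ hlow hup s p q
  rw [storage_self, sub_zero] at hs
  have hexpand : ⟪c • ((G q - G s) - ℓ • (q - s)) + ℓ • (p - s) - (G p - G s), G p - G s⟫
      = (1 - c) * (ℓ * ⟪G p - G s, p - s⟫ - ⟪G p - G s, G p - G s⟫)
        + c * (ℓ * ⟪G p - G s, p - q⟫ - ⟪G p - G q, G p - G s⟫) := by
    simp only [inner_add_left, inner_sub_left, inner_sub_right, real_inner_smul_right,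
      real_inner_comm]
    ring
  rw [hexpand]
  nlinarith [mul_le_mul_of_nonneg_left hs (sub_nonneg.mpr hc1), mul_le_mul_of_nonneg_left hq hc0]

end Storage

theorem sum_weighted_nonneg_of_dissipation {c r : ℝ} (hcr : c ≤ r) (hr : 0 < r) {V w : ℕ → ℝ}
    (hV : ∀ t, 0 ≤ V t) (h0 : V 0 ≤ w 0) (hstep : ∀ t, V (t + 1) - c * V t ≤ w (t + 1))
    (T : ℕ) : 0 ≤ ∑ t ∈ Finset.range (T + 1), (r ^ t)⁻¹ * w t := by
  suffices h : ∀ T, (r ^ T)⁻¹ * V T ≤ ∑ t ∈ Finset.range (T + 1), (r ^ t)⁻¹ * w t from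
    (mul_nonneg (by positivity) (hV T)).trans (h T)
  intro T
  induction T with
  | zero => simpa using h0
  | succ T ih =>
    rw [Finset.sum_range_succ]
    have hdecay : (r ^ (T + 1))⁻¹ * (c * V T) ≤ (r ^ T)⁻¹ * V T := by
      calc (r ^ (T + 1))⁻¹ * (c * V T) = (r ^ T)⁻¹ * (c / r * V T) := by
            rw [pow_succ]; field_simp
        _ ≤ (r ^ T)⁻¹ * V T := by
            gcongr
            exact mul_le_of_le_one_left (hV T) ((div_le_one hr).mpr hcr)
    have := mul_le_mul_of_nonneg_left (hstep T) (by positivity : 0 ≤ (r ^ (T + 1))⁻¹)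
    rw [mul_sub] at this
    linarith

theorem off_by_one_iqc_of_bregman_bounds {g : E → ℝ} {G : E → E} {ℓ : ℝ} (hℓ : 0 ≤ ℓ)
    (hlow : ∀ a b, 0 ≤ bregman g G a b) (hup : ∀ a b, bregman g G a b ≤ ℓ / 2 * ‖b - a‖ ^ 2)
    {c r : ℝ} (hc0 : 0 ≤ c) (hc1 : c ≤ 1) (hcr : c ≤ r) (hr : 0 < r)
    (s : E) (y ψ : ℕ → E) (hψ0 : ψ 0 = 0)
    (hψ : ∀ t, ψ (t + 1) = (G (y t) - G s) - ℓ • (y t - s)) (T : ℕ) :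
    0 ≤ ∑ t ∈ Finset.range (T + 1), (r ^ t)⁻¹ *
      ⟪c • ψ t + ℓ • (y t - s) - (G (y t) - G s), G (y t) - G s⟫ := by
  refine sum_weighted_nonneg_of_dissipation hcr hr (V := fun t => storage g G ℓ s (y t))
    (fun t => storage_nonneg hℓ hlow hup s (y t)) ?_ (fun t => ?_) T
  · -- The zero initial state is the filter state produced by the reference point `s`.
    have hψ0' : ψ 0 = (G s - G s) - ℓ • (s - s) := by simp [hψ0]
    simpa [hψ0'] using storage_sub_mul_storage_le hℓ hlow hup hc0 hc1 s (y 0) s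
  · simpa only [hψ t] using storage_sub_mul_storage_le hℓ hlow hup hc0 hc1 s (y (t + 1)) (y t)

theorem bregman_sub_half_mul_norm_sq [CompleteSpace E] (f : E → ℝ) (m : ℝ) (a b : E) :
    bregman (fun x => f x - m / 2 * ‖x‖ ^ 2) (fun x => gradient f x - m • x) a b
      = f b - f a - ⟪gradient f a, b - a⟫ - m / 2 * ‖b - a‖ ^ 2 := by
  simp only [bregman, inner_sub_left, real_inner_smul_left, norm_sub_sq_real, inner_sub_right,
    real_inner_self_eq_norm_sq, real_inner_comm a b]
  ring

theorem off_by_one_iqc_of_strongly_convex [CompleteSpace E] {f : E → ℝ} {m L : ℝ}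
    (hmL : m ≤ L) (hf : Differentiable ℝ f)
    (hstrong : ∀ a b, f b ≥ f a + ⟪gradient f a, b - a⟫ + m / 2 * ‖b - a‖ ^ 2)
    (hlip : ∀ a b, ‖gradient f a - gradient f b‖ ≤ L * ‖a - b‖)
    {ρbar ρ : ℝ} (hρbar : 0 ≤ ρbar) (hρbarρ : ρbar ≤ ρ) (hρ1 : ρ ≤ 1) (hρ : 0 < ρ)
    (s : E) (y ψ : ℕ → E) (hψ0 : ψ 0 = 0)
    (hψ : ∀ t, ψ (t + 1) = (gradient f (y t) - gradient f s) - L • (y t - s)) (T : ℕ) :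
    0 ≤ ∑ t ∈ Finset.range (T + 1), (ρ ^ (2 * t))⁻¹ *
      ⟪ρbar ^ 2 • ψ t + L • (y t - s) - (gradient f (y t) - gradient f s),
        (gradient f (y t) - gradient f s) - m • (y t - s)⟫ := by
  set G : E → E := fun x => gradient f x - m • x
  have hG : ∀ p, G p - G s = (gradient f p - gradient f s) - m • (p - s) := fun p => by
    simp only [G, smul_sub]; abel
  have hlow : ∀ a b, 0 ≤ bregman _ G a b := fun a b => by
    rw [bregman_sub_half_mul_norm_sq]; linarith [hstrong a b]
  have hup : ∀ a b, bregman _ G a b ≤ (L - m) / 2 * ‖b - a‖ ^ 2 := fun a b => by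
    rw [bregman_sub_half_mul_norm_sq]
    linarith [le_add_inner_gradient_add_of_lipschitz_gradient hf hlip a b]
  have hψG : ∀ t, ψ (t + 1) = (G (y t) - G s) - (L - m) • (y t - s) := fun t => by
    rw [hψ, hG, sub_smul]; abel
  have hρbar1 : ρbar ^ 2 ≤ 1 := by nlinarith
  have hρbarρ2 : ρbar ^ 2 ≤ ρ ^ 2 := by gcongr
  have hiqc := off_by_one_iqc_of_bregman_bounds (sub_nonneg.mpr hmL) hlow hup (sq_nonneg ρbar)
    hρbar1 hρbarρ2 (by positivity) s y ψ hψ0 hψG T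
  refine hiqc.trans_eq (Finset.sum_congr rfl fun t _ => ?_)
  rw [pow_mul, hG, sub_smul]
  congr 2
  abel

theorem distributed_weighted_off_by_one_IQC_general
    (d N : ℕ) (J : Fin N → EuclideanSpace ℝ (Fin d) → ℝ) (m L : Fin N → ℝ)
    (hmL : ∀ k, m k ≤ L k)
    (hdiff : ∀ k, Differentiable ℝ (J k))
    (hstrong : ∀ k a b, J k b ≥ J k a + ⟪gradient (J k) a, b - a⟫ + m k / 2 * ‖b - a‖ ^ 2)
    (hlip : ∀ k a b, ‖gradient (J k) a - gradient (J k) b‖ ≤ L k * ‖a - b‖)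
    (ρbar ρ : ℝ) (hρbar : 0 ≤ ρbar) (hρbarρ : ρbar ≤ ρ) (hρ1 : ρ ≤ 1) (hρ : 0 < ρ)
    (s : Fin N → EuclideanSpace ℝ (Fin d))
    (y : Fin N → ℕ → EuclideanSpace ℝ (Fin d))
    (ψ : Fin N → ℕ → EuclideanSpace ℝ (Fin d))
    (hψ0 : ∀ k, ψ k 0 = 0)
    (hψ : ∀ k t, ψ k (t + 1) =
      (gradient (J k) (y k t) - gradient (J k) (s k)) - L k • (y k t - s k)) :
    ∀ T : ℕ, 0 ≤ ∑ t ∈ Finset.range (T + 1), (ρ ^ (2 * t))⁻¹ *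
      ∑ k, ⟪ρbar ^ 2 • ψ k t + L k • (y k t - s k)
              - (gradient (J k) (y k t) - gradient (J k) (s k)),
            (gradient (J k) (y k t) - gradient (J k) (s k)) - m k • (y k t - s k)⟫ := by
  intro T
  simp_rw [Finset.mul_sum]
  rw [Finset.sum_comm]
  exact Finset.sum_nonneg fun k _ =>
    off_by_one_iqc_of_strongly_convex (hmL k) (hdiff k) (hstrong k) (hlip k)
      hρbar hρbarρ hρ1 hρ (s k) (y k) (ψ k) (hψ0 k) (hψ k) T

/-- **Lemma 2 (Distributed Weighted Off-By-One IQC).**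
Let each `J k : ℝ^d → ℝ` be differentiable, `m k`-strongly convex with
`L k`-Lipschitz gradient (`0 < m k ≤ L k`), and let `0 ≤ ρ̄ ≤ ρ ≤ 1`, `ρ > 0`.
Fix reference points `s k`, let `y k : ℕ → ℝ^d` be arbitrary sequences, set
`ỹ k t = y k t − s k`, `ũ k t = ∇J k (y k t) − ∇J k (s k)`, and let the filter
states satisfy `ψ̃ k 0 = 0`, `ψ̃ k (t+1) = ũ k t − L k • ỹ k t`. Then for every
horizon `T`, the `ρ`-weighted partial sums
`∑_{t=0}^{T} ρ^{−2t} ∑_k ⟨ρ̄² ψ̃ k t + L k ỹ k t − ũ k t, ũ k t − m k ỹ k t⟩`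
are nonnegative (the `ρ`-hard IQC). -/
theorem distributed_weighted_off_by_one_IQC
    (d N : ℕ) (J : Fin N → EuclideanSpace ℝ (Fin d) → ℝ) (m L : Fin N → ℝ)
    (hm : ∀ k, 0 < m k) (hmL : ∀ k, m k ≤ L k)
    (hdiff : ∀ k, Differentiable ℝ (J k))
    (hstrong : ∀ k a b, J k b ≥ J k a + ⟪gradient (J k) a, b - a⟫ + m k / 2 * ‖b - a‖ ^ 2)
    (hlip : ∀ k a b, ‖gradient (J k) a - gradient (J k) b‖ ≤ L k * ‖a - b‖)
    (ρbar ρ : ℝ) (hρbar : 0 ≤ ρbar) (hρbarρ : ρbar ≤ ρ) (hρ1 : ρ ≤ 1) (hρ : 0 < ρ)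
    (s : Fin N → EuclideanSpace ℝ (Fin d))
    (y : Fin N → ℕ → EuclideanSpace ℝ (Fin d))
    (ψ : Fin N → ℕ → EuclideanSpace ℝ (Fin d))
    (hψ0 : ∀ k, ψ k 0 = 0)
    (hψ : ∀ k t, ψ k (t + 1) =
      (gradient (J k) (y k t) - gradient (J k) (s k)) - L k • (y k t - s k)) :
    ∀ T : ℕ, 0 ≤ ∑ t ∈ Finset.range (T + 1), (ρ ^ (2 * t))⁻¹ *
      ∑ k, ⟪ρbar ^ 2 • ψ k t + L k • (y k t - s k)
              - (gradient (J k) (y k t) - gradient (J k) (s k)),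
            (gradient (J k) (y k t) - gradient (J k) (s k)) - m k • (y k t - s k)⟫ :=
  distributed_weighted_off_by_one_IQC_general d N J m L hmL hdiff hstrong hlip ρbar ρ hρbar hρbarρ
    hρ1 hρ s y ψ hψ0 hψ
end

section
/- (Lemma 3.) Let A and P be real N×N matrices, with A symmetric and P a symmetric idempotent (P² = P, Pᵀ = P). Then the matrix powers A^t converge to P as t → ∞ if and only if the following three conditions hold: A·P = P, P·A = P, and ‖A − P‖ < 1, where ‖·‖ is the ℓ² operator norm (spectral norm). -/
/-!
If `A ^ t → P`, passing to the limit in `A * A ^ t = A ^ (t + 1) = A ^ t * A` gives `A * P = P`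
and `P * A = P`. Under these identities, together with `P * P = P`, one has
`(A - P) ^ (t + 1) = A ^ (t + 1) - P`, so `A ^ t → P` if and only if `(A - P) ^ t → 0`.
Since `A - P` is symmetric, it is self-adjoint in the C⋆-ring of matrices with the spectral norm,
where `‖x ^ 2 ^ n‖ = ‖x‖ ^ 2 ^ n`; hence its powers tend to zero exactly when `‖A - P‖ < 1`.
-/

open Matrix Filter Topology

theorem mul_eq_of_tendsto_pow {M : Type*} [Monoid M] [TopologicalSpace M] [ContinuousMul M]
    [T2Space M] {a p : M} (h : Tendsto (a ^ ·) atTop (𝓝 p)) : a * p = p ∧ p * a = p := by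
  have hsucc : Tendsto (fun t : ℕ => a ^ (t + 1)) atTop (𝓝 p) := (tendsto_add_atTop_iff_nat 1).2 h
  refine ⟨tendsto_nhds_unique ?_ hsucc, tendsto_nhds_unique ?_ hsucc⟩
  · simpa only [pow_succ'] using h.const_mul a
  · simpa only [pow_succ] using h.mul_const a

theorem pow_mul_eq_of_mul_eq {M : Type*} [Monoid M] {a p : M} (h : a * p = p) (n : ℕ) :
    a ^ n * p = p := by
  induction n with
  | zero => rw [pow_zero, one_mul]
  | succ n ih => rw [pow_succ', mul_assoc, ih, h]

theorem sub_pow_succ_of_mul_eq {R : Type*} [Ring R] {a p : R} (hp : p * p = p) (hap : a * p = p)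
    (hpa : p * a = p) (n : ℕ) : (a - p) ^ (n + 1) = a ^ (n + 1) - p := by
  induction n with
  | zero => rw [zero_add, pow_one, pow_one]
  | succ n ih =>
    rw [pow_succ, ih, sub_mul, mul_sub, mul_sub, pow_mul_eq_of_mul_eq hap, hpa, hp, ← pow_succ]
    abel

theorem tendsto_pow_nhds_iff_tendsto_sub_pow_nhds_zero {R : Type*} [Ring R] [TopologicalSpace R]
    [IsTopologicalAddGroup R] {a p : R} (hp : p * p = p) (hap : a * p = p) (hpa : p * a = p) :
    Tendsto (a ^ ·) atTop (𝓝 p) ↔ Tendsto ((a - p) ^ ·) atTop (𝓝 0) := by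
  rw [← tendsto_add_atTop_iff_nat 1, ← tendsto_sub_nhds_zero_iff,
    ← tendsto_add_atTop_iff_nat (f := ((a - p) ^ ·)) 1]
  simp only [sub_pow_succ_of_mul_eq hp hap hpa]

theorem IsSelfAdjoint.tendsto_pow_atTop_nhds_zero_iff {E : Type*} [NormedRing E] [StarRing E]
    [CStarRing E] {x : E} (hx : IsSelfAdjoint x) :
    Tendsto (x ^ ·) atTop (𝓝 0) ↔ ‖x‖ < 1 := by
  refine ⟨fun h => ?_, tendsto_pow_atTop_nhds_zero_of_norm_lt_one⟩
  have hnorm : Tendsto (fun n : ℕ => ‖x‖ ^ 2 ^ n) atTop (𝓝 0) := by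
    simpa only [Function.comp_def, hx.norm_pow_two_pow, norm_zero] using
      (h.comp (tendsto_pow_atTop_atTop_of_one_lt one_lt_two)).norm
  by_contra! hx1
  exact zero_lt_one.not_ge (ge_of_tendsto' hnorm fun _ => one_le_pow₀ hx1)

/-- **Lemma 3 (gossip-matrix convergence condition).**
For a symmetric matrix `A` and a symmetric idempotent `P`, the powers `A ^ t`
converge to `P` as `t → ∞` if and only if `A * P = P`, `P * A = P`, and the
spectral norm of `A - P` is less than one. -/
theorem gossip_convergence_iff {N : ℕ} (A P : Matrix (Fin N) (Fin N) ℝ)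
    (hAsymm : Aᵀ = A) (hPsymm : Pᵀ = P) (hPidem : P * P = P) :
    Filter.Tendsto (fun t : ℕ => A ^ t) Filter.atTop (nhds P) ↔
      (A * P = P ∧ P * A = P ∧ ‖Matrix.toEuclideanCLM (𝕜 := ℝ) (A - P)‖ < 1) := by
  have hsa : IsSelfAdjoint (A - P) := by
    rw [IsSelfAdjoint, star_eq_conjTranspose, conjTranspose_eq_transpose_of_trivial,
      transpose_sub, hAsymm, hPsymm]
  -- With the spectral-norm instances, `‖A - P‖` is `‖toEuclideanCLM (A - P)‖` by definition,
  -- while the topology on matrices is still the entrywise one.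
  open scoped Matrix.Norms.L2Operator in
  have hiff (hAP : A * P = P) (hPA : P * A = P) :
      Tendsto (fun t : ℕ => A ^ t) atTop (𝓝 P) ↔ ‖Matrix.toEuclideanCLM (𝕜 := ℝ) (A - P)‖ < 1 :=
    (tendsto_pow_nhds_iff_tendsto_sub_pow_nhds_zero hPidem hAP hPA).trans
      hsa.tendsto_pow_atTop_nhds_zero_iff
  refine ⟨fun h => ?_, fun ⟨hAP, hPA, hnorm⟩ => (hiff hAP hPA).2 hnorm⟩
  obtain ⟨hAP, hPA⟩ := mul_eq_of_tendsto_pow h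
  exact ⟨hAP, hPA, (hiff hAP hPA).1 h⟩
end

section
/- Let A and P be real N×N matrices with P symmetric and idempotent (P² = P, Pᵀ = P), and suppose A·P = P, P·A = P, and ‖A − P‖ < 1, where ‖·‖ is the ℓ² operator norm. Then the fixed-point set of A equals the range of P, i.e., {x ∈ ℝ^N : A·x = x} = range(P). In particular, every fixed point of A lies in the subspace onto which P orthogonally projects. -/
/-!
If `A x = x`, the defect `z = x - P x` satisfies `(A - P) z = z`, because `(A - P) P = AP - P² = 0`.
A contraction fixes only `0`, so `‖A - P‖ < 1` forces `z = 0`, i.e. `x = P x ∈ range P`.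
-/

open Matrix

theorem ContinuousLinearMap.eq_zero_of_apply_eq_self_of_norm_lt_one {𝕜 E : Type*}
    [NontriviallyNormedField 𝕜] [NormedAddCommGroup E] [NormedSpace 𝕜 E] {T : E →L[𝕜] E}
    (hT : ‖T‖ < 1) {v : E} (hv : T v = v) : v = 0 := by
  by_contra hne
  have hpos : 0 < ‖v‖ := norm_pos_iff.mpr hne
  have hle : ‖v‖ ≤ ‖T‖ * ‖v‖ := by
    calc ‖v‖ = ‖T v‖ := by rw [hv]
      _ ≤ ‖T‖ * ‖v‖ := T.le_opNorm v
  linarith [mul_lt_of_lt_one_left hpos hT]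

theorem Matrix.mulVec_eq_zero_of_mulVec_eq_self_of_norm_toEuclideanCLM_lt_one
    {𝕜 n : Type*} [RCLike 𝕜] [Fintype n] [DecidableEq n] {M : Matrix n n 𝕜}
    (hM : ‖toEuclideanCLM (n := n) (𝕜 := 𝕜) M‖ < 1) {z : n → 𝕜} (hz : M *ᵥ z = z) :
    z = 0 := by
  have hfix : toEuclideanCLM (n := n) (𝕜 := 𝕜) M (WithLp.toLp 2 z) = WithLp.toLp 2 z := by
    rw [toEuclideanCLM_toLp, hz]
  simpa using ContinuousLinearMap.eq_zero_of_apply_eq_self_of_norm_lt_one hM hfix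

theorem Matrix.sub_mulVec_sub_mulVec_eq_of_mulVec_eq_self {R n : Type*} [CommRing R]
    [Fintype n] {A P : Matrix n n R} (hPidem : P * P = P) (hAP : A * P = P)
    {x : n → R} (hx : A *ᵥ x = x) : (A - P) *ᵥ (x - P *ᵥ x) = x - P *ᵥ x := by
  have hannihilates : (A - P) * P = 0 := by rw [sub_mul, hAP, hPidem, sub_self]
  rw [mulVec_sub, mulVec_mulVec, hannihilates, zero_mulVec, sub_zero, sub_mulVec, hx]

theorem gossip_fixed_points_eq_range_general {N : ℕ} (A P : Matrix (Fin N) (Fin N) ℝ)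
    (hPidem : P * P = P)
    (hAP : A * P = P)
    (hnorm : ‖Matrix.toEuclideanCLM (𝕜 := ℝ) (A - P)‖ < 1) :
    {x : Fin N → ℝ | A.mulVec x = x} = Set.range P.mulVec := by
  ext x
  constructor
  · intro hx
    have hdefect := mulVec_eq_zero_of_mulVec_eq_self_of_norm_toEuclideanCLM_lt_one hnorm
      (sub_mulVec_sub_mulVec_eq_of_mulVec_eq_self hPidem hAP hx)
    exact ⟨x, (sub_eq_zero.mp hdefect).symm⟩
  · rintro ⟨y, rfl⟩
    exact (mulVec_mulVec y A P).trans (by rw [hAP])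

/-- Under the gossip-matrix conditions, the fixed-point set of `A` equals the
range of the orthogonal projection `P`. -/
theorem gossip_fixed_points_eq_range {N : ℕ} (A P : Matrix (Fin N) (Fin N) ℝ)
    (hPsymm : Pᵀ = P) (hPidem : P * P = P)
    (hAP : A * P = P) (hPA : P * A = P)
    (hnorm : ‖Matrix.toEuclideanCLM (𝕜 := ℝ) (A - P)‖ < 1) :
    {x : Fin N → ℝ | A.mulVec x = x} = Set.range P.mulVec :=
  gossip_fixed_points_eq_range_general A P hPidem hAP hnorm
end

section
/- (Theorem 1: Distributed Algorithm Rate of Convergence.) Let ρ > 0. Let A ∈ ℝ^{n×n}, B ∈ ℝ^{n×n_u}, C_y ∈ ℝ^{n_y×n}, filter matrices A_Ψ ∈ ℝ^{n_ψ×n_ψ}, B_Ψ^y ∈ ℝ^{n_ψ×n_y}, B_Ψ^u ∈ ℝ^{n_ψ×n_u}, C_Ψ ∈ ℝ^{n_z×n_ψ}, D_Ψ^y ∈ ℝ^{n_z×n_y}, D_Ψ^u ∈ ℝ^{n_z×n_u}, a symmetric matrix M ∈ ℝ^{n_z×n_z}, and F_ξ ∈ ℝ^{n_F×n}, F_u ∈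 ℝ^{n_F×n_u}. Suppose sequences ξ^t ∈ ℝ^n, u^t ∈ ℝ^{n_u}, ψ^t ∈ ℝ^{n_ψ}, z^t ∈ ℝ^{n_z} and vectors ξ*, u*, ψ*, z* satisfy, with y^t = C_y ξ^t and y* = C_y ξ*: (i) ξ^{t+1} = Aξ^t + Bu^t for all t; (ii) ψ^{t+1} = A_Ψψ^t + B_Ψ^y y^t + B_Ψ^u u^t with ψ^0 = ψ*, and z^t = C_Ψψ^t + D_Ψ^y y^t + D_Ψ^u u^t; (iii) the fixed-point relations ξ* = Aξ* + Bu*, ψ* = A_Ψψ* + B_Ψ^y y* + B_Ψ^u u*, z* = C_Ψψ* + D_Ψ^y y* + D_Ψ^u u*; (iv) the invariant F_ξξ^t + F_u u^t = 0 for all t and F_ξξ* + F_u u* = 0; (v) the ρ-hard IQC: Σ_{t=0}^{T} ρ^{−2t}(z^t − z*)ᵀM(z^t − z*) ≥ 0 for every T ∈ ℕ. Define the extended matrices Â = [[A, 0],[B_Ψ^y C_y, A_Ψ]], B̂ = [B; B_Ψ^u], Ĉ = [D_Ψ^y C_y, C_Ψ], D̂ = D_Ψ^u, and write ξ̂^t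 = (ξ^t, ψ^t), ξ̂* = (ξ*, ψ*). If there exist a symmetric positive definite P ∈ ℝ^{(n+n_ψ)×(n+n_ψ)} and λ ≥ 0 such that for every triple (v_ξ, v_ψ, v_u) with F_ξ v_ξ + F_u v_u = 0, writing ṽ = (v_ξ, v_ψ): (Âṽ + B̂v_u)ᵀP(Âṽ + B̂v_u) − ρ²·ṽᵀPṽ + λ·(Ĉṽ + D̂v_u)ᵀM(Ĉṽ + D̂v_u) ≤ 0, then for all t ∈ ℕ: ‖ξ^t − ξ*‖ ≤ √(λ_max(P)/λ_min(P)) · ρ^t · ‖ξ̂^0 − ξ̂*‖, where λ_min(P) and λ_max(P) are the smallest and largest eigenvalues of P. -/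
open Matrix Finset

/-!
The error `ê t = ξ̂ t - ξ̂*` of the system augmented by the IQC filter obeys
`ê (t+1) = Â ê t + B̂ (u t - u*)` with `(ξ t - ξ*, u t - u*)` in the kernel of `[F_ξ, F_u]`,
so the LMI gives `V (ê (t+1)) + λ q t ≤ ρ² V (ê t)` for `V x = xᵀ P x` and
`q t = (z t - z*)ᵀ M (z t - z*)`. Weighting step `t` by `ρ^(-2(t+1))` and telescoping, the
`ρ`-hard IQC makes the accumulated `λ`-terms nonnegative, hence `V (ê T) ≤ ρ^(2T) V (ê 0)`;
the Rayleigh bounds `λ_min ‖x‖² ≤ V x ≤ λ_max ‖x‖²` turn this into the estimate.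
-/

namespace Matrix

section Rayleigh

variable {m : Type*} [Fintype m] [DecidableEq m]

lemma dotProduct_self_star_mulVec_of_mem_unitaryGroup {U : Matrix m m ℝ}
    (hU : U ∈ unitaryGroup m ℝ) (x : m → ℝ) :
    (star U *ᵥ x) ⬝ᵥ (star U *ᵥ x) = x ⬝ᵥ x := by
  rw [dotProduct_mulVec, star_eq_conjTranspose, conjTranspose_eq_transpose_of_trivial,
    mulVec_transpose, vecMul_vecMul, ← conjTranspose_eq_transpose_of_trivial,
    ← star_eq_conjTranspose, mem_unitaryGroup_iff.mp hU, vecMul_one]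

lemma IsHermitian.dotProduct_mulVec_eq_sum_eigenvalues {P : Matrix m m ℝ} (hP : P.IsHermitian)
    (x : m → ℝ) :
    x ⬝ᵥ P *ᵥ x =
      ∑ i, hP.eigenvalues i * (star (hP.eigenvectorUnitary : Matrix m m ℝ) *ᵥ x) i ^ 2 := by
  conv_lhs => rw [hP.spectral_theorem, Unitary.conjStarAlgAut_apply]
  rw [← mulVec_mulVec, ← mulVec_mulVec, dotProduct_mulVec, ← mulVec_transpose,
    ← conjTranspose_eq_transpose_of_trivial, ← star_eq_conjTranspose]
  simp [mulVec_diagonal, dotProduct, sq, mul_left_comm]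

lemma IsHermitian.iInf_eigenvalues_mul_le {P : Matrix m m ℝ} (hP : P.IsHermitian) (x : m → ℝ) :
    (⨅ i, hP.eigenvalues i) * (x ⬝ᵥ x) ≤ x ⬝ᵥ P *ᵥ x := by
  rw [hP.dotProduct_mulVec_eq_sum_eigenvalues,
    ← dotProduct_self_star_mulVec_of_mem_unitaryGroup hP.eigenvectorUnitary.2, dotProduct,
    mul_sum]
  refine sum_le_sum fun i _ => ?_
  rw [← sq]
  exact mul_le_mul_of_nonneg_right (ciInf_le (Set.finite_range _).bddBelow i) (sq_nonneg _)

lemma IsHermitian.le_iSup_eigenvalues_mul {P : Matrix m m ℝ} (hP : P.IsHermitian) (x : m → ℝ) :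
    x ⬝ᵥ P *ᵥ x ≤ (⨆ i, hP.eigenvalues i) * (x ⬝ᵥ x) := by
  rw [hP.dotProduct_mulVec_eq_sum_eigenvalues,
    ← dotProduct_self_star_mulVec_of_mem_unitaryGroup hP.eigenvectorUnitary.2, dotProduct,
    mul_sum]
  refine sum_le_sum fun i _ => ?_
  rw [← sq]
  exact mul_le_mul_of_nonneg_right (le_ciSup (Set.finite_range _).bddAbove i) (sq_nonneg _)

lemma PosDef.iInf_eigenvalues_pos [Nonempty m] {P : Matrix m m ℝ} (hP : P.PosDef) :
    0 < ⨅ i, hP.1.eigenvalues i := by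
  obtain ⟨i₀, hi₀⟩ := Finite.exists_min (α := m) hP.1.eigenvalues
  exact (hP.eigenvalues_pos i₀).trans_le (le_ciInf hi₀)

end Rayleigh

section Blocks

variable {R : Type*} [Ring R] {l m n o p : Type*} [Fintype m] [Fintype n] [Fintype o]

lemma mulVec_add_mulVec_sub_mulVec_add_mulVec (A : Matrix l m R) (B : Matrix l n R)
    (x x' : m → R) (w w' : n → R) :
    (A *ᵥ x + B *ᵥ w) - (A *ᵥ x' + B *ᵥ w') = A *ᵥ (x - x') + B *ᵥ (w - w') := by
  rw [mulVec_sub, mulVec_sub]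
  abel

lemma fromBlocks_mulVec_sumElim_add_fromRows_mulVec (A : Matrix l m R) (C : Matrix p m R)
    (D : Matrix p o R) (B : Matrix l n R) (E : Matrix p n R) (x : m → R) (y : o → R)
    (w : n → R) :
    fromBlocks A 0 C D *ᵥ Sum.elim x y + fromRows B E *ᵥ w =
      Sum.elim (A *ᵥ x + B *ᵥ w) (D *ᵥ y + C *ᵥ x + E *ᵥ w) := by
  ext (i | i) <;>
    simp only [fromBlocks_mulVec, fromRows_mulVec, Sum.elim_comp_inl, Sum.elim_comp_inr,
      zero_mulVec, add_zero, Pi.add_apply, Sum.elim_inl, Sum.elim_inr]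
  abel

end Blocks

end Matrix

section HardIQC

variable {V q : ℕ → ℝ} {ρ lam : ℝ}

lemma inv_pow_mul_add_sum_le (hρ : 0 < ρ) (hstep : ∀ t, V (t + 1) + lam * q t ≤ ρ ^ 2 * V t)
    (T : ℕ) :
    (ρ ^ (2 * T))⁻¹ * V T + lam * (ρ ^ 2)⁻¹ * ∑ t ∈ range T, (ρ ^ (2 * t))⁻¹ * q t ≤ V 0 := by
  induction T with
  | zero => simp
  | succ T ih =>
    have hpow : (ρ ^ (2 * (T + 1)))⁻¹ = (ρ ^ (2 * T))⁻¹ * (ρ ^ 2)⁻¹ := by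
      rw [← mul_inv, ← pow_add]; ring_nf
    have hweighted : (ρ ^ (2 * (T + 1)))⁻¹ * (V (T + 1) + lam * q T) ≤ (ρ ^ (2 * T))⁻¹ * V T :=
      calc _ ≤ (ρ ^ (2 * (T + 1)))⁻¹ * (ρ ^ 2 * V T) := by gcongr; exact hstep T
        _ = _ := by rw [hpow]; field_simp
    rw [hpow] at hweighted
    rw [sum_range_succ, hpow]
    linarith

lemma le_pow_mul_of_hardIQC (hρ : 0 < ρ) (hlam : 0 ≤ lam)
    (hstep : ∀ t, V (t + 1) + lam * q t ≤ ρ ^ 2 * V t)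
    (hIQC : ∀ T : ℕ, 0 ≤ ∑ t ∈ range (T + 1), (ρ ^ (2 * t))⁻¹ * q t) (T : ℕ) :
    V T ≤ ρ ^ (2 * T) * V 0 := by
  have hsum : 0 ≤ ∑ t ∈ range T, (ρ ^ (2 * t))⁻¹ * q t := by
    cases T with
    | zero => simp
    | succ T => exact hIQC T
  have hIQCterm : 0 ≤ lam * (ρ ^ 2)⁻¹ * ∑ t ∈ range T, (ρ ^ (2 * t))⁻¹ * q t := by positivity
  have hdecay : (ρ ^ (2 * T))⁻¹ * V T ≤ V 0 := by
    linarith [inv_pow_mul_add_sum_le hρ hstep T]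
  rwa [inv_mul_le_iff₀ (by positivity)] at hdecay

end HardIQC

lemma sum_sq_le_sumElim_dotProduct_sumElim {m n : Type*} [Fintype m] [Fintype n]
    (x : m → ℝ) (y : n → ℝ) :
    ∑ i, x i ^ 2 ≤ Sum.elim x y ⬝ᵥ Sum.elim x y := by
  rw [sumElim_dotProduct_sumElim, dotProduct, dotProduct]
  simp only [← sq]
  linarith [sum_nonneg fun i (_ : i ∈ univ) => sq_nonneg (y i)]

lemma Real.sqrt_le_sqrt_div_mul_pow_mul_sqrt {a b μ K ρ : ℝ} (t : ℕ) (hμ : 0 < μ) (hρ : 0 ≤ ρ)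
    (hb : 0 ≤ b) (h : μ * a ≤ ρ ^ (2 * t) * (K * b)) :
    √a ≤ √(K / μ) * ρ ^ t * √b := by
  have ha : a ≤ K / μ * ((ρ ^ t) ^ 2 * b) := by
    rw [div_mul_eq_mul_div, le_div_iff₀ hμ, ← pow_mul, mul_comm t]
    linarith
  calc √a ≤ √(K / μ * ((ρ ^ t) ^ 2 * b)) := Real.sqrt_le_sqrt ha
    _ = √(K / μ) * ρ ^ t * √b := by
      rw [Real.sqrt_mul' _ (by positivity), Real.sqrt_mul' _ hb, Real.sqrt_sq (by positivity),
        mul_assoc]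

lemma sqrt_sum_sq_le_of_quadratic_decay {ι κ : Type*} [Fintype ι] [Fintype κ] [DecidableEq ι]
    [DecidableEq κ] {P : Matrix (ι ⊕ κ) (ι ⊕ κ) ℝ} (hP : P.PosDef) {ρ : ℝ} (hρ : 0 ≤ ρ) (t : ℕ)
    (x : ι → ℝ) (y : κ → ℝ) (e₀ : ι ⊕ κ → ℝ)
    (hdecay : Sum.elim x y ⬝ᵥ P *ᵥ Sum.elim x y ≤ ρ ^ (2 * t) * (e₀ ⬝ᵥ P *ᵥ e₀)) :
    √(∑ i, x i ^ 2) ≤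
      √((⨆ i, hP.1.eigenvalues i) / (⨅ i, hP.1.eigenvalues i)) * ρ ^ t * √(∑ j, e₀ j ^ 2) := by
  rcases isEmpty_or_nonempty ι with _ | _
  · simp only [univ_eq_empty, sum_empty, Real.sqrt_zero]
    positivity
  have hnorm : ∑ j, e₀ j ^ 2 = e₀ ⬝ᵥ e₀ := by simp only [dotProduct, sq]
  rw [hnorm]
  refine Real.sqrt_le_sqrt_div_mul_pow_mul_sqrt t hP.iInf_eigenvalues_pos hρ
    (dotProduct_self_star_nonneg _) ?_
  calc (⨅ i, hP.1.eigenvalues i) * ∑ i, x i ^ 2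
      ≤ (⨅ i, hP.1.eigenvalues i) * (Sum.elim x y ⬝ᵥ Sum.elim x y) :=
        mul_le_mul_of_nonneg_left (sum_sq_le_sumElim_dotProduct_sumElim x y)
          hP.iInf_eigenvalues_pos.le
    _ ≤ Sum.elim x y ⬝ᵥ P *ᵥ Sum.elim x y := hP.1.iInf_eigenvalues_mul_le _
    _ ≤ ρ ^ (2 * t) * (e₀ ⬝ᵥ P *ᵥ e₀) := hdecay
    _ ≤ ρ ^ (2 * t) * ((⨆ i, hP.1.eigenvalues i) * (e₀ ⬝ᵥ e₀)) := by
        gcongr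
        exact hP.1.le_iSup_eigenvalues_mul _

theorem distributed_rate_of_convergence_general
    {n n_u n_y n_ψ n_z n_F : ℕ} (ρ : ℝ) (hρ : 0 < ρ)
    (A : Matrix (Fin n) (Fin n) ℝ) (B : Matrix (Fin n) (Fin n_u) ℝ)
    (Cy : Matrix (Fin n_y) (Fin n) ℝ)
    (AΨ : Matrix (Fin n_ψ) (Fin n_ψ) ℝ)
    (BΨy : Matrix (Fin n_ψ) (Fin n_y) ℝ) (BΨu : Matrix (Fin n_ψ) (Fin n_u) ℝ)
    (CΨ : Matrix (Fin n_z) (Fin n_ψ) ℝ)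
    (DΨy : Matrix (Fin n_z) (Fin n_y) ℝ) (DΨu : Matrix (Fin n_z) (Fin n_u) ℝ)
    (M : Matrix (Fin n_z) (Fin n_z) ℝ)
    (Fξ : Matrix (Fin n_F) (Fin n) ℝ) (Fu : Matrix (Fin n_F) (Fin n_u) ℝ)
    -- trajectories and fixed point
    (ξ : ℕ → Fin n → ℝ) (u : ℕ → Fin n_u → ℝ)
    (ψ : ℕ → Fin n_ψ → ℝ) (z : ℕ → Fin n_z → ℝ)
    (ξs : Fin n → ℝ) (us : Fin n_u → ℝ) (ψs : Fin n_ψ → ℝ) (zs : Fin n_z → ℝ)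
    -- (i) algorithm dynamics
    (hξ : ∀ t, ξ (t + 1) = A.mulVec (ξ t) + B.mulVec (u t))
    -- (ii) IQC filter dynamics, initialized at the fixed point
    (hψ : ∀ t, ψ (t + 1) =
      AΨ.mulVec (ψ t) + BΨy.mulVec (Cy.mulVec (ξ t)) + BΨu.mulVec (u t))
    (hz : ∀ t, z t =
      CΨ.mulVec (ψ t) + DΨy.mulVec (Cy.mulVec (ξ t)) + DΨu.mulVec (u t))
    -- (iii) fixed-point relations
    (hξs : ξs = A.mulVec ξs + B.mulVec us)
    (hψs : ψs = AΨ.mulVec ψs + BΨy.mulVec (Cy.mulVec ξs) + BΨu.mulVec us)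
    (hzs : zs = CΨ.mulVec ψs + DΨy.mulVec (Cy.mulVec ξs) + DΨu.mulVec us)
    -- (iv) invariant
    (hinv : ∀ t, Fξ.mulVec (ξ t) + Fu.mulVec (u t) = 0)
    (hinvs : Fξ.mulVec ξs + Fu.mulVec us = 0)
    -- (v) ρ-hard IQC
    (hIQC : ∀ T : ℕ, 0 ≤ ∑ t ∈ Finset.range (T + 1),
      (ρ ^ (2 * t))⁻¹ * ((z t - zs) ⬝ᵥ M.mulVec (z t - zs)))
    -- LMI certificate
    (P : Matrix (Fin n ⊕ Fin n_ψ) (Fin n ⊕ Fin n_ψ) ℝ) (hP : P.PosDef)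
    (lam : ℝ) (hlam : 0 ≤ lam)
    (hLMI : ∀ (vξ : Fin n → ℝ) (vψ : Fin n_ψ → ℝ) (vu : Fin n_u → ℝ),
      Fξ.mulVec vξ + Fu.mulVec vu = 0 →
      letI Ahat : Matrix (Fin n ⊕ Fin n_ψ) (Fin n ⊕ Fin n_ψ) ℝ :=
        Matrix.fromBlocks A 0 (BΨy * Cy) AΨ
      letI Bhat : Matrix (Fin n ⊕ Fin n_ψ) (Fin n_u) ℝ := Matrix.fromRows B BΨu
      letI Chat : Matrix (Fin n_z) (Fin n ⊕ Fin n_ψ) ℝ :=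
        Matrix.fromCols (DΨy * Cy) CΨ
      letI v : (Fin n ⊕ Fin n_ψ) → ℝ := Sum.elim vξ vψ
      letI vnext : (Fin n ⊕ Fin n_ψ) → ℝ := Ahat.mulVec v + Bhat.mulVec vu
      letI zv : Fin n_z → ℝ := Chat.mulVec v + DΨu.mulVec vu
      vnext ⬝ᵥ P.mulVec vnext - ρ ^ 2 * (v ⬝ᵥ P.mulVec v)
        + lam * (zv ⬝ᵥ M.mulVec zv) ≤ 0) :
    ∀ t : ℕ,
      Real.sqrt (∑ i, (ξ t i - ξs i) ^ 2) ≤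
        Real.sqrt ((⨆ i, hP.1.eigenvalues i) / (⨅ i, hP.1.eigenvalues i)) * ρ ^ t *
          Real.sqrt (∑ j, (Sum.elim (ξ 0) (ψ 0) j - Sum.elim ξs ψs j) ^ 2) := by
  set e : ℕ → Fin n ⊕ Fin n_ψ → ℝ := fun t => Sum.elim (ξ t) (ψ t) - Sum.elim ξs ψs
  have he_elim : ∀ t, e t = Sum.elim (ξ t - ξs) (ψ t - ψs) :=
    fun t => (Sum.elim_sub_sub _ _ _ _).symm
  have he_succ : ∀ t, e (t + 1) =
      fromBlocks A 0 (BΨy * Cy) AΨ *ᵥ e t + fromRows B BΨu *ᵥ (u t - us) := by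
    intro t
    rw [← mulVec_add_mulVec_sub_mulVec_add_mulVec, fromBlocks_mulVec_sumElim_add_fromRows_mulVec,
      fromBlocks_mulVec_sumElim_add_fromRows_mulVec, ← mulVec_mulVec, ← mulVec_mulVec, ← hξ, ← hψ,
      ← hξs, ← hψs]
  have hz_sub : ∀ t, z t - zs = fromCols (DΨy * Cy) CΨ *ᵥ e t + DΨu *ᵥ (u t - us) := by
    intro t
    rw [← mulVec_add_mulVec_sub_mulVec_add_mulVec, fromCols_mulVec_sumElim,
      fromCols_mulVec_sumElim, ← mulVec_mulVec, ← mulVec_mulVec, add_comm (DΨy *ᵥ _),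
      add_comm (DΨy *ᵥ _), hz, hzs]
  have hstep : ∀ t, e (t + 1) ⬝ᵥ P *ᵥ e (t + 1) + lam * ((z t - zs) ⬝ᵥ M *ᵥ (z t - zs)) ≤
      ρ ^ 2 * (e t ⬝ᵥ P *ᵥ e t) := by
    intro t
    have hker : Fξ *ᵥ (ξ t - ξs) + Fu *ᵥ (u t - us) = 0 := by
      rw [mulVec_sub, mulVec_sub, sub_add_sub_comm, hinv, hinvs, sub_zero]
    have hLMIt := hLMI (ξ t - ξs) (ψ t - ψs) (u t - us) hker
    rw [← he_elim, ← he_succ, ← hz_sub] at hLMIt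
    linarith
  intro t
  have hdecay := le_pow_mul_of_hardIQC (V := fun t => e t ⬝ᵥ P *ᵥ e t) hρ hlam hstep hIQC t
  rw [he_elim] at hdecay
  exact sqrt_sum_sq_le_of_quadratic_decay hP hρ.le t _ _ (e 0) hdecay

/-- **Theorem 1 (Distributed Algorithm Rate of Convergence).**
Consider the algorithm `ξ^{t+1} = A ξ^t + B u^t`, `y^t = C_y ξ^t`, with invariant
`F_ξ ξ^t + F_u u^t = 0`, fixed point `(ξ*, u*, ψ*, z*)`, and IQC filter `Ψ` (state
`ψ`, output `z`) initialized at its fixed point, whose output satisfies the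
`ρ`-hard IQC for the symmetric multiplier `M`. If there exist a positive definite
`P` and `λ ≥ 0` such that the quadratic-form LMI holds on the nullspace of
`[F_ξ, 0, F_u]`, then `‖ξ^t − ξ*‖ ≤ √(λ_max(P)/λ_min(P)) · ρ^t · ‖ξ̂^0 − ξ̂*‖`. -/
theorem distributed_rate_of_convergence
    {n n_u n_y n_ψ n_z n_F : ℕ} (ρ : ℝ) (hρ : 0 < ρ)
    (A : Matrix (Fin n) (Fin n) ℝ) (B : Matrix (Fin n) (Fin n_u) ℝ)
    (Cy : Matrix (Fin n_y) (Fin n) ℝ)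
    (AΨ : Matrix (Fin n_ψ) (Fin n_ψ) ℝ)
    (BΨy : Matrix (Fin n_ψ) (Fin n_y) ℝ) (BΨu : Matrix (Fin n_ψ) (Fin n_u) ℝ)
    (CΨ : Matrix (Fin n_z) (Fin n_ψ) ℝ)
    (DΨy : Matrix (Fin n_z) (Fin n_y) ℝ) (DΨu : Matrix (Fin n_z) (Fin n_u) ℝ)
    (M : Matrix (Fin n_z) (Fin n_z) ℝ) (hM : M.IsHermitian)
    (Fξ : Matrix (Fin n_F) (Fin n) ℝ) (Fu : Matrix (Fin n_F) (Fin n_u) ℝ)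
    -- trajectories and fixed point
    (ξ : ℕ → Fin n → ℝ) (u : ℕ → Fin n_u → ℝ)
    (ψ : ℕ → Fin n_ψ → ℝ) (z : ℕ → Fin n_z → ℝ)
    (ξs : Fin n → ℝ) (us : Fin n_u → ℝ) (ψs : Fin n_ψ → ℝ) (zs : Fin n_z → ℝ)
    -- (i) algorithm dynamics
    (hξ : ∀ t, ξ (t + 1) = A.mulVec (ξ t) + B.mulVec (u t))
    -- (ii) IQC filter dynamics, initialized at the fixed point
    (hψ0 : ψ 0 = ψs)
    (hψ : ∀ t, ψ (t + 1) =
      AΨ.mulVec (ψ t) + BΨy.mulVec (Cy.mulVec (ξ t)) + BΨu.mulVec (u t))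
    (hz : ∀ t, z t =
      CΨ.mulVec (ψ t) + DΨy.mulVec (Cy.mulVec (ξ t)) + DΨu.mulVec (u t))
    -- (iii) fixed-point relations
    (hξs : ξs = A.mulVec ξs + B.mulVec us)
    (hψs : ψs = AΨ.mulVec ψs + BΨy.mulVec (Cy.mulVec ξs) + BΨu.mulVec us)
    (hzs : zs = CΨ.mulVec ψs + DΨy.mulVec (Cy.mulVec ξs) + DΨu.mulVec us)
    -- (iv) invariant
    (hinv : ∀ t, Fξ.mulVec (ξ t) + Fu.mulVec (u t) = 0)
    (hinvs : Fξ.mulVec ξs + Fu.mulVec us = 0)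
    -- (v) ρ-hard IQC
    (hIQC : ∀ T : ℕ, 0 ≤ ∑ t ∈ Finset.range (T + 1),
      (ρ ^ (2 * t))⁻¹ * ((z t - zs) ⬝ᵥ M.mulVec (z t - zs)))
    -- LMI certificate
    (P : Matrix (Fin n ⊕ Fin n_ψ) (Fin n ⊕ Fin n_ψ) ℝ) (hP : P.PosDef)
    (lam : ℝ) (hlam : 0 ≤ lam)
    (hLMI : ∀ (vξ : Fin n → ℝ) (vψ : Fin n_ψ → ℝ) (vu : Fin n_u → ℝ),
      Fξ.mulVec vξ + Fu.mulVec vu = 0 →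
      letI Ahat : Matrix (Fin n ⊕ Fin n_ψ) (Fin n ⊕ Fin n_ψ) ℝ :=
        Matrix.fromBlocks A 0 (BΨy * Cy) AΨ
      letI Bhat : Matrix (Fin n ⊕ Fin n_ψ) (Fin n_u) ℝ := Matrix.fromRows B BΨu
      letI Chat : Matrix (Fin n_z) (Fin n ⊕ Fin n_ψ) ℝ :=
        Matrix.fromCols (DΨy * Cy) CΨ
      letI v : (Fin n ⊕ Fin n_ψ) → ℝ := Sum.elim vξ vψ
      letI vnext : (Fin n ⊕ Fin n_ψ) → ℝ := Ahat.mulVec v + Bhat.mulVec vu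
      letI zv : Fin n_z → ℝ := Chat.mulVec v + DΨu.mulVec vu
      vnext ⬝ᵥ P.mulVec vnext - ρ ^ 2 * (v ⬝ᵥ P.mulVec v)
        + lam * (zv ⬝ᵥ M.mulVec zv) ≤ 0) :
    ∀ t : ℕ,
      Real.sqrt (∑ i, (ξ t i - ξs i) ^ 2) ≤
        Real.sqrt ((⨆ i, hP.1.eigenvalues i) / (⨅ i, hP.1.eigenvalues i)) * ρ ^ t *
          Real.sqrt (∑ j, (Sum.elim (ξ 0) (ψ 0) j - Sum.elim ξs ψs j) ^ 2) :=
  distributed_rate_of_convergence_general ρ hρ A B Cy AΨ BΨy BΨu CΨ DΨy DΨu M Fξ Fu ξ u ψ z ξs us ψs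
    zs hξ hψ hz hξs hψs hzs hinv hinvs hIQC P hP lam hlam hLMI
end

section
/- (Theorem 1, multiple-IQC version.) Let ρ > 0 and consider the same algorithm data A ∈ ℝ^{n×n}, B ∈ ℝ^{n×n_u}, C_y ∈ ℝ^{n_y×n}, F_ξ ∈ ℝ^{n_F×n}, F_u ∈ ℝ^{n_F×n_u}, together with r IQC filters: for i = 1,…,r, matrices A_{Ψ,i}, B_{Ψ,i}^y, B_{Ψ,i}^u, C_{Ψ,i}, D_{Ψ,i}^y, D_{Ψ,i}^u and symmetric matrices M_i. Suppose sequences ξ^t, u^t and fixed points ξ*, u* satisfy ξ^{t+1} = Aξ^t + Bu^t, ξ* = Aξ* + Bu*, the invariant F_ξξ^t + F_u u^t = 0 for all t and F_ξξ* + F_u u* = 0, and, with y^t = C_yξ^t, y* = C_yξ*, for each i the filter state ψ_i^t (initialized at its fixed point ψ_i*) and output z_i^t are generated by the i-th filter driven by (y^t, u^t), with fixed point z_i*, and each satisfies the ρ-hard IQC: Σ_{t=0}^{T} ρ^{−2t}(z_i^t − z_i*)ᵀM_i(z_i^t − z_i*) ≥ 0 for all T. Define the extended system Â, B̂ by stacking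 the algorithm state with all filter states (Â = [[A, 0],[B_Ψ^y C_y, A_Ψ]] with A_Ψ, B_Ψ^y, B_Ψ^u block-diagonal/stacked over i), and for each i let Ĉ_i, D̂_i map the extended state and input to z_i. If there exist a symmetric positive definite P and scalars λ_1,…,λ_r ≥ 0 such that for every (v_ξ, v_ψ, v_u) with F_ξ v_ξ + F_u v_u = 0, writing ṽ = (v_ξ, v_ψ): (Âṽ + B̂v_u)ᵀP(Âṽ + B̂v_u) − ρ²·ṽᵀPṽ + Σ_{i=1}^{r} λ_i·(Ĉ_iṽ + D̂_iv_u)ᵀM_i(Ĉ_iṽ + D̂_iv_u) ≤ 0, then ‖ξ^t − ξ*‖ ≤ √(λ_max(P)/λ_min(P)) · ρ^t · ‖ξ̂^0 − ξ̂*‖ for all t ∈ ℕ, where ξ̂^t stacks ξ^t with all filter states. -/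
open Matrix Finset

theorem my_quad_decomp {m : Type*} [Fintype m] [DecidableEq m] {P : Matrix m m ℝ}
    (hP : P.IsHermitian) (x : m → ℝ) :
    x ⬝ᵥ P.mulVec x =
      ∑ j, hP.eigenvalues j * (((hP.eigenvectorUnitary : Matrix m m ℝ))ᵀ.mulVec x j)^2 := by
  have hspec := hP.spectral_theorem
  have h1 : P.mulVec x = (hP.eigenvectorUnitary : Matrix m m ℝ).mulVec
      ((Matrix.diagonal hP.eigenvalues).mulVec
        ((hP.eigenvectorUnitary : Matrix m m ℝ)ᵀ.mulVec x)) := by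
    conv_lhs => rw [hspec]
    simp [← Matrix.mulVec_mulVec, Matrix.mul_assoc]
    rfl
  rw [h1, Matrix.dotProduct_mulVec, ← Matrix.mulVec_transpose]
  simp [dotProduct, Matrix.mulVec_diagonal]
  exact Finset.sum_congr rfl fun j _ => by ring

theorem my_norm_decomp {m : Type*} [Fintype m] [DecidableEq m] {P : Matrix m m ℝ}
    (hP : P.IsHermitian) (x : m → ℝ) :
    x ⬝ᵥ x = ∑ j, (((hP.eigenvectorUnitary : Matrix m m ℝ))ᵀ.mulVec x j)^2 := by
  have hunit : (hP.eigenvectorUnitary : Matrix m m ℝ) *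
      (hP.eigenvectorUnitary : Matrix m m ℝ)ᵀ = 1 :=
    (Matrix.mem_unitaryGroup_iff).mp hP.eigenvectorUnitary.2
  have h2 : ∑ j, (((hP.eigenvectorUnitary : Matrix m m ℝ))ᵀ.mulVec x j)^2
      = ((hP.eigenvectorUnitary : Matrix m m ℝ)ᵀ.mulVec x) ⬝ᵥ
        ((hP.eigenvectorUnitary : Matrix m m ℝ)ᵀ.mulVec x) := by
    simp [dotProduct, sq]
  rw [h2, Matrix.dotProduct_mulVec, ← Matrix.mulVec_transpose, Matrix.mulVec_mulVec,
    Matrix.transpose_transpose, hunit, Matrix.one_mulVec]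

theorem my_quad_le_sup {m : Type*} [Fintype m] [DecidableEq m] [Nonempty m]
    {P : Matrix m m ℝ} (hP : P.IsHermitian) (x : m → ℝ) :
    x ⬝ᵥ P.mulVec x ≤ (⨆ j, hP.eigenvalues j) * (x ⬝ᵥ x) := by
  rw [my_quad_decomp hP x, my_norm_decomp hP x, Finset.mul_sum]
  refine Finset.sum_le_sum fun j _ => ?_
  exact mul_le_mul_of_nonneg_right
    (le_ciSup (Set.Finite.bddAbove (Set.finite_range _)) j) (sq_nonneg _)

theorem my_inf_le_quad {m : Type*} [Fintype m] [DecidableEq m] [Nonempty m]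
    {P : Matrix m m ℝ} (hP : P.IsHermitian) (x : m → ℝ) :
    (⨅ j, hP.eigenvalues j) * (x ⬝ᵥ x) ≤ x ⬝ᵥ P.mulVec x := by
  rw [my_quad_decomp hP x, my_norm_decomp hP x, Finset.mul_sum]
  refine Finset.sum_le_sum fun j _ => ?_
  exact mul_le_mul_of_nonneg_right
    (ciInf_le (Set.Finite.bddBelow (Set.finite_range _)) j) (sq_nonneg _)

/-- **Theorem 1, multiple-IQC version.**
Same algorithm as Theorem 1, now with `r` IQC filters `Ψ_i` (states `ψ i`,
outputs `z i`, multipliers `M i`), each initialized at its fixed point and each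
satisfying the `ρ`-hard IQC. The extended state stacks the algorithm state `ξ`
with all filter states (extended matrices `Â = [[A, 0],[B_Ψ^y C_y, A_Ψ]]`,
`B̂ = [B; B_Ψ^u]` with block-diagonal `A_Ψ`, written here blockwise), and the LMI
uses the block-diagonal combination `∑ i, λ_i M_i`. Feasibility yields
`‖ξ^t − ξ*‖ ≤ √(λ_max(P)/λ_min(P)) · ρ^t · ‖ξ̂^0 − ξ̂*‖`. -/
theorem distributed_rate_of_convergence_multi_IQC
    {n n_u n_y n_F r : ℕ} {n_ψ n_z : Fin r → ℕ} (ρ : ℝ) (hρ : 0 < ρ)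
    (A : Matrix (Fin n) (Fin n) ℝ) (B : Matrix (Fin n) (Fin n_u) ℝ)
    (Cy : Matrix (Fin n_y) (Fin n) ℝ)
    (AΨ : ∀ i, Matrix (Fin (n_ψ i)) (Fin (n_ψ i)) ℝ)
    (BΨy : ∀ i, Matrix (Fin (n_ψ i)) (Fin n_y) ℝ)
    (BΨu : ∀ i, Matrix (Fin (n_ψ i)) (Fin n_u) ℝ)
    (CΨ : ∀ i, Matrix (Fin (n_z i)) (Fin (n_ψ i)) ℝ)
    (DΨy : ∀ i, Matrix (Fin (n_z i)) (Fin n_y) ℝ)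
    (DΨu : ∀ i, Matrix (Fin (n_z i)) (Fin n_u) ℝ)
    (M : ∀ i, Matrix (Fin (n_z i)) (Fin (n_z i)) ℝ) (hM : ∀ i, (M i).IsHermitian)
    (Fξ : Matrix (Fin n_F) (Fin n) ℝ) (Fu : Matrix (Fin n_F) (Fin n_u) ℝ)
    -- trajectories and fixed point
    (ξ : ℕ → Fin n → ℝ) (u : ℕ → Fin n_u → ℝ)
    (ψ : ∀ i, ℕ → Fin (n_ψ i) → ℝ) (z : ∀ i, ℕ → Fin (n_z i) → ℝ)
    (ξs : Fin n → ℝ) (us : Fin n_u → ℝ)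
    (ψs : ∀ i, Fin (n_ψ i) → ℝ) (zs : ∀ i, Fin (n_z i) → ℝ)
    -- algorithm dynamics and its fixed point
    (hξ : ∀ t, ξ (t + 1) = A.mulVec (ξ t) + B.mulVec (u t))
    (hξs : ξs = A.mulVec ξs + B.mulVec us)
    -- invariant
    (hinv : ∀ t, Fξ.mulVec (ξ t) + Fu.mulVec (u t) = 0)
    (hinvs : Fξ.mulVec ξs + Fu.mulVec us = 0)
    -- IQC filter dynamics, each initialized at its fixed point
    (hψ0 : ∀ i, ψ i 0 = ψs i)
    (hψ : ∀ i t, ψ i (t + 1) =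
      (AΨ i).mulVec (ψ i t) + (BΨy i).mulVec (Cy.mulVec (ξ t)) + (BΨu i).mulVec (u t))
    (hz : ∀ i t, z i t =
      (CΨ i).mulVec (ψ i t) + (DΨy i).mulVec (Cy.mulVec (ξ t)) + (DΨu i).mulVec (u t))
    (hψs : ∀ i, ψs i =
      (AΨ i).mulVec (ψs i) + (BΨy i).mulVec (Cy.mulVec ξs) + (BΨu i).mulVec us)
    (hzs : ∀ i, zs i =
      (CΨ i).mulVec (ψs i) + (DΨy i).mulVec (Cy.mulVec ξs) + (DΨu i).mulVec us)
    -- ρ-hard IQCs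
    (hIQC : ∀ i, ∀ T : ℕ, 0 ≤ ∑ t ∈ Finset.range (T + 1),
      (ρ ^ (2 * t))⁻¹ * ((z i t - zs i) ⬝ᵥ (M i).mulVec (z i t - zs i)))
    -- LMI certificate on the extended state space `Fin n ⊕ Σ i, Fin (n_ψ i)`
    (P : Matrix (Fin n ⊕ ((i : Fin r) × Fin (n_ψ i)))
                (Fin n ⊕ ((i : Fin r) × Fin (n_ψ i))) ℝ) (hP : P.PosDef)
    (lam : Fin r → ℝ) (hlam : ∀ i, 0 ≤ lam i)
    (hLMI : ∀ (vξ : Fin n → ℝ) (vψ : ∀ i, Fin (n_ψ i) → ℝ) (vu : Fin n_u → ℝ),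
      Fξ.mulVec vξ + Fu.mulVec vu = 0 →
      letI v : (Fin n ⊕ ((i : Fin r) × Fin (n_ψ i))) → ℝ :=
        Sum.elim vξ (fun p => vψ p.1 p.2)
      letI vnext : (Fin n ⊕ ((i : Fin r) × Fin (n_ψ i))) → ℝ :=
        Sum.elim (A.mulVec vξ + B.mulVec vu)
          (fun p => ((AΨ p.1).mulVec (vψ p.1) + (BΨy p.1).mulVec (Cy.mulVec vξ)
                      + (BΨu p.1).mulVec vu) p.2)
      letI zv : ∀ i, Fin (n_z i) → ℝ := fun i =>
        (CΨ i).mulVec (vψ i) + (DΨy i).mulVec (Cy.mulVec vξ) + (DΨu i).mulVec vu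
      vnext ⬝ᵥ P.mulVec vnext - ρ ^ 2 * (v ⬝ᵥ P.mulVec v)
        + ∑ i, lam i * (zv i ⬝ᵥ (M i).mulVec (zv i)) ≤ 0) :
    ∀ t : ℕ,
      Real.sqrt (∑ i, (ξ t i - ξs i) ^ 2) ≤
        Real.sqrt ((⨆ j, hP.1.eigenvalues j) / (⨅ j, hP.1.eigenvalues j)) * ρ ^ t *
          Real.sqrt (∑ j, (Sum.elim (ξ 0) (fun p : (i : Fin r) × Fin (n_ψ i) => ψ p.1 0 p.2) j
                            - Sum.elim ξs (fun p : (i : Fin r) × Fin (n_ψ i) => ψs p.1 p.2) j) ^ 2) := by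

  classical
  -- extended error trajectory
  set e : ℕ → (Fin n ⊕ ((i : Fin r) × Fin (n_ψ i))) → ℝ :=
    fun t => Sum.elim (ξ t - ξs) (fun p => (ψ p.1 t - ψs p.1) p.2) with he
  set V : ℕ → ℝ := fun t => e t ⬝ᵥ P.mulVec (e t) with hVdef
  set q : Fin r → ℕ → ℝ :=
    fun i t => (z i t - zs i) ⬝ᵥ (M i).mulVec (z i t - zs i) with hq
  have hρ2 : (0:ℝ) < ρ ^ 2 := pow_pos hρ 2
  have hpow : ∀ t : ℕ, (0:ℝ) < ρ ^ (2 * t) := fun t => pow_pos hρ _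
  -- key one-step inequality from the LMI
  have key : ∀ t, V (t+1) + ∑ i, lam i * q i t ≤ ρ ^ 2 * V t := by
    intro t
    have hc : Fξ.mulVec (ξ t - ξs) + Fu.mulVec (u t - us) = 0 := by
      have h1 : Fξ.mulVec (ξ t - ξs) + Fu.mulVec (u t - us)
          = (Fξ.mulVec (ξ t) + Fu.mulVec (u t)) - (Fξ.mulVec ξs + Fu.mulVec us) := by
        rw [Matrix.mulVec_sub, Matrix.mulVec_sub]; abel
      rw [h1, hinv t, hinvs, sub_zero]
    have hK := hLMI (ξ t - ξs) (fun i => ψ i t - ψs i) (u t - us) hc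
    have hxi : A.mulVec (ξ t - ξs) + B.mulVec (u t - us) = ξ (t+1) - ξs := by
      rw [hξ t]; conv_rhs => rw [hξs]
      funext j; simp [Matrix.mulVec_sub]; ring
    have hpsi : ∀ i, (AΨ i).mulVec (ψ i t - ψs i) + (BΨy i).mulVec (Cy.mulVec (ξ t - ξs))
        + (BΨu i).mulVec (u t - us) = ψ i (t+1) - ψs i := by
      intro i
      rw [hψ i t]; conv_rhs => rw [hψs i]
      funext j; simp [Matrix.mulVec_sub]; ring
    have hzz : ∀ i, (CΨ i).mulVec (ψ i t - ψs i) + (DΨy i).mulVec (Cy.mulVec (ξ t - ξs))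
        + (DΨu i).mulVec (u t - us) = z i t - zs i := by
      intro i
      rw [hz i t]; conv_rhs => rw [hzs i]
      funext j; simp [Matrix.mulVec_sub]; ring
    simp only [hxi, hpsi, hzz] at hK
    have hvt : Sum.elim (ξ t - ξs) (fun p : (i : Fin r) × Fin (n_ψ i) =>
        (ψ p.1 t - ψs p.1) p.2) = e t := rfl
    have hvt1 : Sum.elim (ξ (t+1) - ξs) (fun p : (i : Fin r) × Fin (n_ψ i) =>
        (ψ p.1 (t+1) - ψs p.1) p.2) = e (t+1) := rfl
    rw [hvt, hvt1] at hK
    have hgoal : e (t+1) ⬝ᵥ P.mulVec (e (t+1))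
        + ∑ i, lam i * ((z i t - zs i) ⬝ᵥ (M i).mulVec (z i t - zs i))
        ≤ ρ ^ 2 * (e t ⬝ᵥ P.mulVec (e t)) := by linarith [hK]
    exact hgoal
  -- decay of the weighted Lyapunov function
  have main : ∀ T : ℕ, (ρ ^ (2*T))⁻¹ * V T
      + (ρ ^ 2)⁻¹ * ∑ i, lam i * (∑ t ∈ Finset.range T, (ρ ^ (2*t))⁻¹ * q i t) ≤ V 0 := by
    intro T
    induction T with
    | zero => simp
    | succ T ih =>
      have hk := key T
      have hmul := mul_le_mul_of_nonneg_left hk (le_of_lt (inv_pos.mpr (hpow (T+1))))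
      have hpows : (ρ ^ (2*(T+1)))⁻¹ * (ρ ^ 2 * V T) = (ρ ^ (2*T))⁻¹ * V T := by
        have : ρ ^ (2*(T+1)) = ρ ^ 2 * ρ ^ (2*T) := by ring
        rw [this, mul_inv]
        field_simp
      have hsum : ∀ i : Fin r, ∑ t ∈ Finset.range (T+1), (ρ ^ (2*t))⁻¹ * q i t
          = (∑ t ∈ Finset.range T, (ρ ^ (2*t))⁻¹ * q i t) + (ρ ^ (2*T))⁻¹ * q i T := by
        intro i; rw [Finset.sum_range_succ]
      have hsplit : ∑ i, lam i * (∑ t ∈ Finset.range (T+1), (ρ ^ (2*t))⁻¹ * q i t)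
          = (∑ i, lam i * (∑ t ∈ Finset.range T, (ρ ^ (2*t))⁻¹ * q i t))
            + (ρ ^ (2*T))⁻¹ * ∑ i, lam i * q i T := by
        simp only [Finset.sum_range_succ, mul_add, Finset.sum_add_distrib, Finset.mul_sum]
        congr 1
        exact Finset.sum_congr rfl fun i _ => by ring
      have hc1 : (ρ ^ (2*(T+1)))⁻¹ = (ρ ^ 2)⁻¹ * (ρ ^ (2*T))⁻¹ := by
        rw [show 2*(T+1) = 2 + 2*T by ring, pow_add, mul_inv]
      calc (ρ ^ (2*(T+1)))⁻¹ * V (T+1)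
            + (ρ ^ 2)⁻¹ * ∑ i, lam i * (∑ t ∈ Finset.range (T+1), (ρ ^ (2*t))⁻¹ * q i t)
          = (ρ ^ (2*(T+1)))⁻¹ * (V (T+1) + ∑ i, lam i * q i T)
            + (ρ ^ 2)⁻¹ * ∑ i, lam i * (∑ t ∈ Finset.range T, (ρ ^ (2*t))⁻¹ * q i t) := by
            rw [hsplit, hc1]; ring
        _ ≤ (ρ ^ (2*T))⁻¹ * V T
            + (ρ ^ 2)⁻¹ * ∑ i, lam i * (∑ t ∈ Finset.range T, (ρ ^ (2*t))⁻¹ * q i t) := by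
            rw [← hpows]; linarith [hmul]
        _ ≤ V 0 := ih
  -- nonnegativity of the IQC sums
  have hIQCsum : ∀ (i : Fin r) (T : ℕ),
      0 ≤ ∑ t ∈ Finset.range T, (ρ ^ (2*t))⁻¹ * q i t := by
    intro i T
    cases T with
    | zero => simp
    | succ S =>
      have := hIQC i S
      simpa [hq] using this
  have hVbound : ∀ T : ℕ, V T ≤ ρ ^ (2*T) * V 0 := by
    intro T
    have h1 : 0 ≤ (ρ ^ 2)⁻¹ * ∑ i, lam i * (∑ t ∈ Finset.range T, (ρ ^ (2*t))⁻¹ * q i t) := by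
      apply mul_nonneg (le_of_lt (inv_pos.mpr hρ2))
      exact Finset.sum_nonneg fun i _ => mul_nonneg (hlam i) (hIQCsum i T)
    have h2 : (ρ ^ (2*T))⁻¹ * V T ≤ V 0 := by linarith [main T]
    have := mul_le_mul_of_nonneg_left h2 (le_of_lt (hpow T))
    rwa [mul_inv_cancel_left₀ (ne_of_gt (hpow T))] at this
  intro T
  -- empty-state case
  by_cases hne : Nonempty (Fin n ⊕ ((i : Fin r) × Fin (n_ψ i)))
  case neg =>
    have hempty : IsEmpty (Fin n ⊕ ((i : Fin r) × Fin (n_ψ i))) := not_nonempty_iff.mp hne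
    haveI := hempty
    haveI : IsEmpty (Fin n) := Function.isEmpty (Sum.inl : Fin n → Fin n ⊕ ((i : Fin r) × Fin (n_ψ i)))
    haveI : IsEmpty ((i : Fin r) × Fin (n_ψ i)) := Function.isEmpty (Sum.inr : ((i : Fin r) × Fin (n_ψ i)) → Fin n ⊕ ((i : Fin r) × Fin (n_ψ i)))
    simp
  case pos =>
    haveI := hne
    set lmin : ℝ := ⨅ j, hP.1.eigenvalues j with hlmin
    set lmax : ℝ := ⨆ j, hP.1.eigenvalues j with hlmax
    have hlminpos : 0 < lmin := by
      obtain ⟨j0, hj0⟩ := exists_eq_ciInf_of_finite (f := hP.1.eigenvalues)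
      rw [hlmin, ← hj0]; exact hP.eigenvalues_pos j0
    have hlmaxpos : 0 < lmax := by
      obtain ⟨j0, hj0⟩ := exists_eq_ciInf_of_finite (f := hP.1.eigenvalues)
      calc (0:ℝ) < hP.1.eigenvalues j0 := hP.eigenvalues_pos j0
        _ ≤ lmax := le_ciSup (Set.Finite.bddAbove (Set.finite_range _)) j0
    have hlow : lmin * (e T ⬝ᵥ e T) ≤ V T := my_inf_le_quad hP.1 (e T)
    have hup : V 0 ≤ lmax * (e 0 ⬝ᵥ e 0) := my_quad_le_sup hP.1 (e 0)
    have hsub : ∑ i, (ξ T i - ξs i) ^ 2 ≤ e T ⬝ᵥ e T := by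
      have : e T ⬝ᵥ e T = (∑ i, (ξ T i - ξs i) ^ 2)
          + ∑ p : (i : Fin r) × Fin (n_ψ i), (e T (Sum.inr p)) ^ 2 := by
        simp only [dotProduct, ← sq]
        rw [Fintype.sum_sum_type]
        congr 1
      rw [this]
      have : 0 ≤ ∑ p : (i : Fin r) × Fin (n_ψ i), (e T (Sum.inr p)) ^ 2 :=
        Finset.sum_nonneg fun p _ => sq_nonneg _
      linarith
    have he0 : ∀ j, (Sum.elim (ξ 0) (fun p : (i : Fin r) × Fin (n_ψ i) => ψ p.1 0 p.2) j
        - Sum.elim ξs (fun p : (i : Fin r) × Fin (n_ψ i) => ψs p.1 p.2) j) = e 0 j := by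
      intro j; cases j <;> simp [he]
    have hD0 : (∑ j, (Sum.elim (ξ 0) (fun p : (i : Fin r) × Fin (n_ψ i) => ψ p.1 0 p.2) j
        - Sum.elim ξs (fun p : (i : Fin r) × Fin (n_ψ i) => ψs p.1 p.2) j) ^ 2)
        = e 0 ⬝ᵥ e 0 := by
      simp only [he0, dotProduct, sq]
    rw [hD0]
    have hchain : ∑ i, (ξ T i - ξs i) ^ 2 ≤ (lmax / lmin) * (ρ ^ (2*T)) * (e 0 ⬝ᵥ e 0) := by
      have h1 : lmin * (∑ i, (ξ T i - ξs i) ^ 2) ≤ V T :=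
        le_trans (mul_le_mul_of_nonneg_left hsub (le_of_lt hlminpos)) hlow
      have h2 : V T ≤ ρ ^ (2*T) * (lmax * (e 0 ⬝ᵥ e 0)) :=
        le_trans (hVbound T) (mul_le_mul_of_nonneg_left hup (le_of_lt (hpow T)))
      have h3 : lmin * (∑ i, (ξ T i - ξs i) ^ 2) ≤ ρ ^ (2*T) * (lmax * (e 0 ⬝ᵥ e 0)) :=
        le_trans h1 h2
      rw [div_mul_eq_mul_div, div_mul_eq_mul_div, le_div_iff₀ hlminpos]
      nlinarith [h3]
    calc Real.sqrt (∑ i, (ξ T i - ξs i) ^ 2)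
        ≤ Real.sqrt ((lmax / lmin) * (ρ ^ (2*T)) * (e 0 ⬝ᵥ e 0)) := Real.sqrt_le_sqrt hchain
      _ = Real.sqrt (lmax / lmin) * ρ ^ T * Real.sqrt (e 0 ⬝ᵥ e 0) := by
          rw [Real.sqrt_mul (by positivity), Real.sqrt_mul (by positivity)]
          congr 1
          rw [show (2*T) = T*2 by ring, pow_mul, Real.sqrt_sq (by positivity)]
end

section
/- (Theorem 2: Distributed Algorithm Sensitivity.) Consider matrices A ∈ ℝ^{n×n}, B ∈ ℝ^{n×n_u}, C_y ∈ ℝ^{n_y×n}, C_ω ∈ ℝ^{n_ω×n}, filter matrices A_Ψ, B_Ψ^y, B_Ψ^u, C_Ψ, D_Ψ^y, D_Ψ^u, a symmetric matrix M, invariant matrices F_ξ, F_u, and a symmetric positive definite R ∈ ℝ^{n_u×n_u}. Let (Ω, 𝔉, μ) be a probability space and let w^t : Ω → ℝ^{n_u}, t ∈ ℕ, be square-integrable random vectors that are mutually independent, with E[w^t] = 0 and E[w^t (w^t)ᵀ] ⪯ R for every t. Let ξ^t, u^t, ψ^t, z^t be square-integrable random sequences and ξ*, u*, ψ*, z* deterministic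 vectors such that, pathwise (for every sample and every t), with y^t = C_yξ^t, y* = C_yξ*: (i) ξ^{t+1} = Aξ^t + B(u^t + w^t), with ξ^0 deterministic; (ii) ψ^{t+1} = A_Ψψ^t + B_Ψ^y y^t + B_Ψ^u u^t with ψ^0 = ψ*, and z^t = C_Ψψ^t + D_Ψ^y y^t + D_Ψ^u u^t; (iii) ξ* = Aξ* + Bu*, ψ* = A_Ψψ* + B_Ψ^y y* + B_Ψ^u u*, z* = C_Ψψ* + D_Ψ^y y* + D_Ψ^u u*; (iv) F_ξξ^t + F_u u^t = 0 and F_ξξ* + F_u u* = 0; (v) the hard IQC Σ_{t=0}^{T}(z^t − z*)ᵀM(z^t − z*) ≥ 0 holds pathwise for every T; and (vi) for each t, the pair (ξ^t, ψ^t, u^t) is independent of w^t. Define Â = [[A, 0],[B_Ψ^y C_y, A_Ψ]], B̂ = [B; B_Ψ^u], Ĉ = [D_Ψ^y C_y, C_Ψ], D̂ = D_Ψ^u, and write ω^t = C_ωξ^t, ω* = C_ωξ*. If there exist a symmetric positive semidefinite P ∈ ℝ^{(n+n_ψ)×(n+n_ψ)}, partitioned as P = [[P₁₁, P₁₂],[P₁₂ᵀ,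 P₂₂]] conformably with the (ξ, ψ) blocks, and λ ≥ 0 such that for every (v_ξ, v_ψ, v_u) with F_ξ v_ξ + F_u v_u = 0, writing ṽ = (v_ξ, v_ψ): (Âṽ + B̂v_u)ᵀP(Âṽ + B̂v_u) − ṽᵀPṽ + λ·(Ĉṽ + D̂v_u)ᵀM(Ĉṽ + D̂v_u) + ‖C_ω v_ξ‖² ≤ 0, then limsup_{T→∞} (1/T) Σ_{t=0}^{T−1} E‖ω^t − ω*‖² ≤ tr(R·BᵀP₁₁B); i.e., the sensitivity γ satisfies γ ≤ √(tr(R·BᵀP₁₁B)). -/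
/-!
In the error coordinates `η = (ξ - ξ*, ψ - ψ*)`, `d = u - u*` the closed loop reads
`η⁺ = Âη + B̂d + [B; 0] w`, and the LMI, evaluated pathwise on the invariant subspace, says that
`V(η) = ηᵀPη` decreases along the noise-free step `Âη + B̂d` by at least
`λ (z - z*)ᵀM(z - z*) + ‖ω - ω*‖²`. The noise is centred and independent of `Âη + B̂d`, so the
cross terms vanish in expectation and the noise adds exactly `E wᵀ[B; 0]ᵀP[B; 0]w`, which is at
most `tr(R Bᵀ P₁₁ B)`. Summing over `t < T`, `E V` telescopes and is nonnegative, and the hard IQC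
makes the accumulated multiplier term nonnegative; hence `∑_{t<T} E‖ω^t - ω*‖²` is at most
`E V(η⁰) + T tr(R Bᵀ P₁₁ B)`, and dividing by `T` gives the bound on the limsup.
-/

open Matrix Finset MeasureTheory ProbabilityTheory Filter

namespace Matrix

open scoped ComplexOrder MatrixOrder in
theorem PosSemidef.trace_mul_nonneg {𝕜 n : Type*} [RCLike 𝕜] [Fintype n]
    {A B : Matrix n n 𝕜} (hA : A.PosSemidef) (hB : B.PosSemidef) : 0 ≤ (A * B).trace := by
  classical
  obtain ⟨X, rfl⟩ := CStarAlgebra.nonneg_iff_eq_star_mul_self.mp hA.nonneg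
  rw [Matrix.mul_assoc, trace_mul_comm, star_eq_conjTranspose]
  exact (hB.mul_mul_conjTranspose_same X).trace_nonneg

open scoped ComplexOrder in
theorem trace_mul_le_trace_mul_of_posSemidef {𝕜 n : Type*} [RCLike 𝕜] [Fintype n]
    {S R Q : Matrix n n 𝕜} (hSR : (R - S).PosSemidef) (hQ : Q.PosSemidef) :
    (S * Q).trace ≤ (R * Q).trace := by
  simpa [Matrix.sub_mul, trace_sub] using hSR.trace_mul_nonneg hQ

end Matrix

@[fun_prop]
theorem Continuous.sumElim_pi {X α β E : Type*} [TopologicalSpace X] [TopologicalSpace E]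
    {f : X → α → E} {g : X → β → E} (hf : Continuous f) (hg : Continuous g) :
    Continuous fun x => Sum.elim (f x) (g x) :=
  Homeomorph.sumArrowHomeomorphProdArrow.symm.continuous.comp (hf.prodMk hg)

namespace MeasureTheory

variable {Ω : Type*} [MeasurableSpace Ω] {μ : Measure Ω} {ι κ : Type*} [Fintype ι] [Fintype κ]

theorem MemLp.mulVec {p : ENNReal} {f : Ω → κ → ℝ} (hf : MemLp f p μ) (N : Matrix ι κ ℝ) :
    MemLp (fun x => N *ᵥ f x) p μ :=
  (LinearMap.toContinuousLinearMap (Matrix.mulVecLin N)).comp_memLp' hf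

theorem MemLp.sumElim {p : ENNReal} {f : Ω → ι → ℝ} {g : Ω → κ → ℝ} (hf : MemLp f p μ)
    (hg : MemLp g p μ) : MemLp (fun x => Sum.elim (f x) (g x)) p μ :=
  memLp_pi_iff.2 <| by rintro (i | i) <;> [exact hf.eval i; exact hg.eval i]

theorem MemLp.integrable_dotProduct {f g : Ω → ι → ℝ} (hf : MemLp f 2 μ) (hg : MemLp g 2 μ) :
    Integrable (fun x => f x ⬝ᵥ g x) μ :=
  integrable_finsetSum _ fun i _ => (hf.eval i).integrable_mul (hg.eval i)

noncomputable def secondMoment (μ : Measure Ω) (w : Ω → κ → ℝ) : Matrix κ κ ℝ :=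
  Matrix.of fun i j => ∫ x, w x i * w x j ∂μ

theorem MemLp.integral_dotProduct_mulVec_eq_trace {w : Ω → κ → ℝ} (hw : MemLp w 2 μ)
    (Q : Matrix κ κ ℝ) : ∫ x, w x ⬝ᵥ Q *ᵥ w x ∂μ = (secondMoment μ w * Q).trace := by
  have hint (i j : κ) : Integrable (fun x => Q j i * (w x i * w x j)) μ :=
    ((hw.eval i).integrable_mul (hw.eval j)).const_mul _
  calc ∫ x, w x ⬝ᵥ Q *ᵥ w x ∂μ = ∫ x, ∑ j, ∑ i, Q j i * (w x i * w x j) ∂μ := by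
        congr 1; ext x
        simp only [dotProduct, Matrix.mulVec, Finset.mul_sum]
        exact sum_congr rfl fun j _ => sum_congr rfl fun i _ => by ring
    _ = ∑ j, ∑ i, Q j i * ∫ x, w x i * w x j ∂μ := by
        rw [integral_finsetSum _ fun j _ => integrable_finsetSum _ fun i _ => hint i j]
        simp_rw [integral_finsetSum _ fun i _ => hint i _, integral_const_mul]
    _ = (secondMoment μ w * Q).trace := by
        rw [trace_mul_comm]
        rfl

theorem sum_range_integral_nonneg {g : ℕ → Ω → ℝ} (hg : ∀ t, Integrable (g t) μ)
    (h : ∀ x, ∀ T : ℕ, 0 ≤ ∑ t ∈ range (T + 1), g t x) (T : ℕ) :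
    0 ≤ ∑ t ∈ range T, ∫ x, g t x ∂μ := by
  rcases T with _ | T
  · simp
  · rw [← integral_finsetSum _ fun t _ => hg t]
    exact integral_nonneg fun x => h x T

end MeasureTheory

namespace ProbabilityTheory

variable {Ω : Type*} [MeasurableSpace Ω] {μ : Measure Ω} {ι κ : Type*} [Fintype ι] [Fintype κ]

theorem IndepFun.integral_dotProduct_mulVec {f : Ω → ι → ℝ} {w : Ω → κ → ℝ}
    (hfw : IndepFun f w μ) (hf : Integrable f μ) (hw : Integrable w μ) (N : Matrix ι κ ℝ) :
    ∫ x, f x ⬝ᵥ N *ᵥ w x ∂μ = (∫ x, f x ∂μ) ⬝ᵥ N *ᵥ ∫ x, w x ∂μ := by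
  classical
  simpa [LinearMap.toContinuousBilinearMap_apply, Matrix.toLinearMap₂'_apply'] using
    hfw.integral_bilin hf hw (Matrix.toLinearMap₂' ℝ N).toContinuousBilinearMap

theorem IndepFun.integral_quadForm_add_mulVec [IsFiniteMeasure μ] {f : Ω → ι → ℝ}
    {w : Ω → κ → ℝ} (hfw : IndepFun f w μ) (hf : MemLp f 2 μ) (hw : MemLp w 2 μ)
    (hw0 : ∫ x, w x ∂μ = 0) (P : Matrix ι ι ℝ) (G : Matrix ι κ ℝ) :
    ∫ x, (f x + G *ᵥ w x) ⬝ᵥ P *ᵥ (f x + G *ᵥ w x) ∂μ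
      = ∫ x, f x ⬝ᵥ P *ᵥ f x ∂μ + ∫ x, w x ⬝ᵥ (Gᵀ * P * G) *ᵥ w x ∂μ := by
  have hfw_zero (N : Matrix ι κ ℝ) : ∫ x, f x ⬝ᵥ N *ᵥ w x ∂μ = 0 := by
    rw [hfw.integral_dotProduct_mulVec (hf.integrable one_le_two) (hw.integrable one_le_two),
      hw0, mulVec_zero, dotProduct_zero]
  have hwf_zero (N : Matrix κ ι ℝ) : ∫ x, w x ⬝ᵥ N *ᵥ f x ∂μ = 0 := by
    rw [hfw.symm.integral_dotProduct_mulVec (hw.integrable one_le_two)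
      (hf.integrable one_le_two), hw0, zero_dotProduct]
  have hswap (a : κ → ℝ) (v : ι → ℝ) : (G *ᵥ a) ⬝ᵥ v = a ⬝ᵥ Gᵀ *ᵥ v := by
    rw [dotProduct_comm, dotProduct_transpose_mulVec]
  have hexpand (x : Ω) : (f x + G *ᵥ w x) ⬝ᵥ P *ᵥ (f x + G *ᵥ w x)
      = f x ⬝ᵥ P *ᵥ f x + f x ⬝ᵥ (P * G) *ᵥ w x + w x ⬝ᵥ (Gᵀ * P) *ᵥ f x
        + w x ⬝ᵥ (Gᵀ * P * G) *ᵥ w x := by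
    simp only [mulVec_add, dotProduct_add, add_dotProduct, hswap, mulVec_mulVec,
      Matrix.mul_assoc]
    ring
  have hff := hf.integrable_dotProduct (hf.mulVec P)
  have hfw' := hf.integrable_dotProduct (hw.mulVec (P * G))
  have hwf := hw.integrable_dotProduct (hf.mulVec (Gᵀ * P))
  have hww := hw.integrable_dotProduct (hw.mulVec (Gᵀ * P * G))
  simp_rw [hexpand]
  rw [integral_add (by exact (hff.add hfw').add hwf) hww,
    integral_add (by exact hff.add hfw') hwf, integral_add hff hfw', hfw_zero, hwf_zero,
    add_zero, add_zero]

theorem integral_le_of_dissipation_ineq [IsFiniteMeasure μ]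
    {η η' f : Ω → ι → ℝ} {w : Ω → κ → ℝ} {s r : Ω → ℝ}
    {P : Matrix ι ι ℝ} {G : Matrix ι κ ℝ} {R : Matrix κ κ ℝ} {lam : ℝ}
    (hP : P.PosSemidef) (hη : MemLp η 2 μ) (hf : MemLp f 2 μ) (hw : MemLp w 2 μ)
    (hs : Integrable s μ) (hr : Integrable r μ) (hfw : IndepFun f w μ)
    (hw0 : ∫ x, w x ∂μ = 0) (hwR : (R - secondMoment μ w).PosSemidef)
    (hη' : ∀ x, η' x = f x + G *ᵥ w x)
    (hdiss : ∀ x, f x ⬝ᵥ P *ᵥ f x - η x ⬝ᵥ P *ᵥ η x + lam * s x + r x ≤ 0) :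
    ∫ x, r x ∂μ ≤ ∫ x, η x ⬝ᵥ P *ᵥ η x ∂μ - ∫ x, η' x ⬝ᵥ P *ᵥ η' x ∂μ
      - lam * ∫ x, s x ∂μ + (R * (Gᵀ * P * G)).trace := by
  have hnext : ∫ x, η' x ⬝ᵥ P *ᵥ η' x ∂μ
      = ∫ x, f x ⬝ᵥ P *ᵥ f x ∂μ + ∫ x, w x ⬝ᵥ (Gᵀ * P * G) *ᵥ w x ∂μ := by
    simp_rw [hη']
    exact hfw.integral_quadForm_add_mulVec hf hw hw0 P G
  have hnoise : ∫ x, w x ⬝ᵥ (Gᵀ * P * G) *ᵥ w x ∂μ ≤ (R * (Gᵀ * P * G)).trace := by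
    rw [hw.integral_dotProduct_mulVec_eq_trace]
    refine trace_mul_le_trace_mul_of_posSemidef hwR ?_
    simpa using hP.conjTranspose_mul_mul_same G
  have hff := hf.integrable_dotProduct (hf.mulVec P)
  have hfs : Integrable (fun x => f x ⬝ᵥ P *ᵥ f x + lam * s x) μ := hff.add (hs.const_mul lam)
  have hdrift : ∫ x, f x ⬝ᵥ P *ᵥ f x + lam * s x + r x ∂μ ≤ ∫ x, η x ⬝ᵥ P *ᵥ η x ∂μ :=
    integral_mono (hfs.add hr) (hη.integrable_dotProduct (hη.mulVec P)) fun x => by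
      linarith [hdiss x]
  rw [integral_add hfs hr, integral_add hff (hs.const_mul lam), integral_const_mul] at hdrift
  linarith

end ProbabilityTheory

theorem sum_range_le_of_le_sub_succ {a V I : ℕ → ℝ} {lam c : ℝ} (hV : ∀ t, 0 ≤ V t)
    (hlam : 0 ≤ lam) (hI : ∀ T, 0 ≤ ∑ t ∈ range T, I t)
    (h : ∀ t, a t ≤ V t - V (t + 1) - lam * I t + c) (T : ℕ) :
    ∑ t ∈ range T, a t ≤ V 0 + T * c := by
  calc ∑ t ∈ range T, a t ≤ ∑ t ∈ range T, (V t - V (t + 1) - lam * I t + c) :=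
        sum_le_sum fun t _ => h t
    _ = V 0 - V T - lam * ∑ t ∈ range T, I t + T * c := by
      rw [sum_add_distrib, sum_sub_distrib, sum_range_sub', ← mul_sum, sum_const, card_range,
        nsmul_eq_mul]
    _ ≤ V 0 + T * c := by linarith [hV T, mul_nonneg hlam (hI T)]

theorem limsup_one_div_mul_sum_range_le {a : ℕ → ℝ} {C c : ℝ} (ha : ∀ t, 0 ≤ a t)
    (h : ∀ T, ∑ t ∈ range T, a t ≤ C + T * c) :
    limsup (fun T : ℕ => 1 / (T : ℝ) * ∑ t ∈ range T, a t) atTop ≤ c := by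
  have hlim : Tendsto (fun T : ℕ => C / T + c) atTop (nhds c) := by
    simpa using (tendsto_const_div_atTop_nhds_zero_nat C).add_const c
  have hle : ∀ᶠ T : ℕ in atTop, 1 / (T : ℝ) * ∑ t ∈ range T, a t ≤ C / T + c := by
    filter_upwards [eventually_gt_atTop 0] with T hT
    have hT' : (0 : ℝ) < T := by exact_mod_cast hT
    rw [div_add' _ _ _ hT'.ne', one_div_mul_eq_div, div_le_div_iff_of_pos_right hT']
    linarith [h T]
  have hbdd : IsBoundedUnder (· ≥ ·) atTop fun T : ℕ => 1 / (T : ℝ) * ∑ t ∈ range T, a t :=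
    isBoundedUnder_of ⟨0, fun T => mul_nonneg (by positivity) (sum_nonneg fun t _ => ha t)⟩
  calc limsup (fun T : ℕ => 1 / (T : ℝ) * ∑ t ∈ range T, a t) atTop
      ≤ limsup (fun T : ℕ => C / T + c) atTop :=
        limsup_le_limsup hle hbdd.isCoboundedUnder_le hlim.isBoundedUnder_le
    _ = c := hlim.limsup_eq

section ErrorCoordinates

variable {n m p q r : Type*} [Fintype n] [Fintype m] [Fintype p] [Fintype q]

theorem sumElim_sub_eq_fromBlocks_mulVec_add {A : Matrix n n ℝ} {B : Matrix n q ℝ}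
    {Cy : Matrix p n ℝ} {AΨ : Matrix m m ℝ} {BΨy : Matrix m p ℝ} {BΨu : Matrix m q ℝ}
    {ξ ξ' ξs : n → ℝ} {ψ ψ' ψs : m → ℝ} {u us w : q → ℝ}
    (hξ : ξ' = A *ᵥ ξ + B *ᵥ (u + w)) (hψ : ψ' = AΨ *ᵥ ψ + BΨy *ᵥ (Cy *ᵥ ξ) + BΨu *ᵥ u)
    (hξs : ξs = A *ᵥ ξs + B *ᵥ us)
    (hψs : ψs = AΨ *ᵥ ψs + BΨy *ᵥ (Cy *ᵥ ξs) + BΨu *ᵥ us) :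
    Sum.elim (ξ' - ξs) (ψ' - ψs)
      = fromBlocks A 0 (BΨy * Cy) AΨ *ᵥ Sum.elim (ξ - ξs) (ψ - ψs)
        + fromRows B BΨu *ᵥ (u - us) + fromRows B 0 *ᵥ w := by
  rw [fromBlocks_mulVec, fromRows_mulVec, fromRows_mulVec, Sum.elim_comp_inl, Sum.elim_comp_inr]
  simp only [← Sum.elim_add_add]
  subst hξ hψ
  congr 1
  · conv_lhs => rw [hξs]
    simp only [mulVec_add, mulVec_sub, zero_mulVec]
    abel
  · conv_lhs => rw [hψs]
    simp only [mulVec_sub, zero_mulVec, ← mulVec_mulVec]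
    abel

theorem sub_eq_fromCols_mulVec_sumElim {Cy : Matrix p n ℝ} {CΨ : Matrix r m ℝ}
    {DΨy : Matrix r p ℝ} {DΨu : Matrix r q ℝ} {ξ ξs : n → ℝ} {ψ ψs : m → ℝ} {u us : q → ℝ}
    {z zs : r → ℝ} (hz : z = CΨ *ᵥ ψ + DΨy *ᵥ (Cy *ᵥ ξ) + DΨu *ᵥ u)
    (hzs : zs = CΨ *ᵥ ψs + DΨy *ᵥ (Cy *ᵥ ξs) + DΨu *ᵥ us) :
    z - zs = fromCols (DΨy * Cy) CΨ *ᵥ Sum.elim (ξ - ξs) (ψ - ψs) + DΨu *ᵥ (u - us) := by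
  rw [hz, hzs, fromCols_mulVec_sumElim]
  simp only [mulVec_sub, ← mulVec_mulVec]
  abel

end ErrorCoordinates

-- Both zero blocks are typed: with an untyped `0` the outer `*` elaborates to `CStarMatrix`
-- multiplication, and the lemma no longer rewrites `Matrix` products.
theorem transpose_fromRows_zero_mul_mul {n m q : Type*} [Fintype n] [Fintype m]
    (B : Matrix n q ℝ) (P : Matrix (n ⊕ m) (n ⊕ m) ℝ) :
    (fromRows B (0 : Matrix m q ℝ))ᵀ * P * fromRows B (0 : Matrix m q ℝ)
      = Bᵀ * P.toBlocks₁₁ * B := by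
  rw [transpose_fromRows, ← fromBlocks_toBlocks P, fromCols_mul_fromBlocks, fromCols_mul_fromRows]
  simp

theorem distributed_sensitivity_general
    {n n_u n_y n_w n_ψ n_z n_F : ℕ}
    (A : Matrix (Fin n) (Fin n) ℝ) (B : Matrix (Fin n) (Fin n_u) ℝ)
    (Cy : Matrix (Fin n_y) (Fin n) ℝ) (Cω : Matrix (Fin n_w) (Fin n) ℝ)
    (AΨ : Matrix (Fin n_ψ) (Fin n_ψ) ℝ)
    (BΨy : Matrix (Fin n_ψ) (Fin n_y) ℝ) (BΨu : Matrix (Fin n_ψ) (Fin n_u) ℝ)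
    (CΨ : Matrix (Fin n_z) (Fin n_ψ) ℝ)
    (DΨy : Matrix (Fin n_z) (Fin n_y) ℝ) (DΨu : Matrix (Fin n_z) (Fin n_u) ℝ)
    (M : Matrix (Fin n_z) (Fin n_z) ℝ)
    (Fξ : Matrix (Fin n_F) (Fin n) ℝ) (Fu : Matrix (Fin n_F) (Fin n_u) ℝ)
    (R : Matrix (Fin n_u) (Fin n_u) ℝ)
    -- the probability space and the noise process
    (Ω : Type*) [MeasurableSpace Ω] (μ : Measure Ω) [IsProbabilityMeasure μ]
    (w : ℕ → Ω → Fin n_u → ℝ)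
    (hwL2 : ∀ t, MemLp (w t) 2 μ)
    (hwmean : ∀ t, ∫ x, w t x ∂μ = 0)
    (hwcov : ∀ t,
      (R - Matrix.of (fun j j' : Fin n_u => ∫ x, w t x j * w t x j' ∂μ)).PosSemidef)
    -- stochastic trajectories and deterministic fixed point
    (ξ : ℕ → Ω → Fin n → ℝ) (u : ℕ → Ω → Fin n_u → ℝ)
    (ψ : ℕ → Ω → Fin n_ψ → ℝ) (z : ℕ → Ω → Fin n_z → ℝ)
    (ξs : Fin n → ℝ) (us : Fin n_u → ℝ) (ψs : Fin n_ψ → ℝ) (zs : Fin n_z → ℝ)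
    (hξL2 : ∀ t, MemLp (ξ t) 2 μ) (huL2 : ∀ t, MemLp (u t) 2 μ)
    (hψL2 : ∀ t, MemLp (ψ t) 2 μ) (hzL2 : ∀ t, MemLp (z t) 2 μ)
    -- (i) noisy algorithm dynamics, with deterministic initial condition
    (hξ : ∀ x t, ξ (t + 1) x = A.mulVec (ξ t x) + B.mulVec (u t x + w t x))
    -- (ii) IQC filter dynamics, initialized at the fixed point
    (hψ : ∀ x t, ψ (t + 1) x =
      AΨ.mulVec (ψ t x) + BΨy.mulVec (Cy.mulVec (ξ t x)) + BΨu.mulVec (u t x))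
    (hz : ∀ x t, z t x =
      CΨ.mulVec (ψ t x) + DΨy.mulVec (Cy.mulVec (ξ t x)) + DΨu.mulVec (u t x))
    -- (iii) fixed-point relations
    (hξs : ξs = A.mulVec ξs + B.mulVec us)
    (hψs : ψs = AΨ.mulVec ψs + BΨy.mulVec (Cy.mulVec ξs) + BΨu.mulVec us)
    (hzs : zs = CΨ.mulVec ψs + DΨy.mulVec (Cy.mulVec ξs) + DΨu.mulVec us)
    -- (iv) invariant
    (hinv : ∀ x t, Fξ.mulVec (ξ t x) + Fu.mulVec (u t x) = 0)
    (hinvs : Fξ.mulVec ξs + Fu.mulVec us = 0)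
    -- (v) hard IQC, pathwise
    (hIQC : ∀ x, ∀ T : ℕ, 0 ≤ ∑ t ∈ Finset.range (T + 1),
      (z t x - zs) ⬝ᵥ M.mulVec (z t x - zs))
    -- (vi) `(ξ^t, ψ^t, u^t)` is independent of `w^t`
    (hindep : ∀ t, IndepFun (fun x => (ξ t x, ψ t x, u t x)) (w t) μ)
    -- LMI certificate
    (P : Matrix (Fin n ⊕ Fin n_ψ) (Fin n ⊕ Fin n_ψ) ℝ) (hP : P.PosSemidef)
    (lam : ℝ) (hlam : 0 ≤ lam)
    (hLMI : ∀ (vξ : Fin n → ℝ) (vψ : Fin n_ψ → ℝ) (vu : Fin n_u → ℝ),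
      Fξ.mulVec vξ + Fu.mulVec vu = 0 →
      letI Ahat : Matrix (Fin n ⊕ Fin n_ψ) (Fin n ⊕ Fin n_ψ) ℝ :=
        Matrix.fromBlocks A 0 (BΨy * Cy) AΨ
      letI Bhat : Matrix (Fin n ⊕ Fin n_ψ) (Fin n_u) ℝ := Matrix.fromRows B BΨu
      letI Chat : Matrix (Fin n_z) (Fin n ⊕ Fin n_ψ) ℝ :=
        Matrix.fromCols (DΨy * Cy) CΨ
      letI v : (Fin n ⊕ Fin n_ψ) → ℝ := Sum.elim vξ vψ
      letI vnext : (Fin n ⊕ Fin n_ψ) → ℝ := Ahat.mulVec v + Bhat.mulVec vu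
      letI zv : Fin n_z → ℝ := Chat.mulVec v + DΨu.mulVec vu
      vnext ⬝ᵥ P.mulVec vnext - v ⬝ᵥ P.mulVec v
        + lam * (zv ⬝ᵥ M.mulVec zv)
        + ∑ i, (Cω.mulVec vξ i) ^ 2 ≤ 0) :
    Filter.limsup
      (fun T : ℕ => (1 / (T : ℝ)) * ∑ t ∈ Finset.range T,
        ∫ x, (∑ i, (Cω.mulVec (ξ t x) i - Cω.mulVec ξs i) ^ 2) ∂μ)
      Filter.atTop
      ≤ (R * (Bᵀ * P.toBlocks₁₁ * B)).trace := by
  set Ahat : Matrix (Fin n ⊕ Fin n_ψ) (Fin n ⊕ Fin n_ψ) ℝ := fromBlocks A 0 (BΨy * Cy) AΨ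
  set Bhat : Matrix (Fin n ⊕ Fin n_ψ) (Fin n_u) ℝ := fromRows B BΨu
  let η (t : ℕ) (x : Ω) : Fin n ⊕ Fin n_ψ → ℝ := Sum.elim (ξ t x - ξs) (ψ t x - ψs)
  let f (t : ℕ) (x : Ω) : Fin n ⊕ Fin n_ψ → ℝ := Ahat *ᵥ η t x + Bhat *ᵥ (u t x - us)
  have hηL2 (t : ℕ) : MemLp (η t) 2 μ :=
    ((hξL2 t).sub (memLp_const ξs)).sumElim ((hψL2 t).sub (memLp_const ψs))
  have hfL2 (t : ℕ) : MemLp (f t) 2 μ :=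
    ((hηL2 t).mulVec Ahat).add (((huL2 t).sub (memLp_const us)).mulVec Bhat)
  have hφ : Measurable fun v : (Fin n → ℝ) × (Fin n_ψ → ℝ) × (Fin n_u → ℝ) =>
      Ahat *ᵥ Sum.elim (v.1 - ξs) (v.2.1 - ψs) + Bhat *ᵥ (v.2.2 - us) := by fun_prop
  have hfw (t : ℕ) : IndepFun (f t) (w t) μ := (hindep t).comp hφ measurable_id
  have hIQCL1 (t : ℕ) : Integrable (fun x => (z t x - zs) ⬝ᵥ M *ᵥ (z t x - zs)) μ :=
    have hz := (hzL2 t).sub (memLp_const zs)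
    hz.integrable_dotProduct (hz.mulVec M)
  have hωL1 (t : ℕ) : Integrable (fun x => ∑ i, ((Cω *ᵥ ξ t x) i - (Cω *ᵥ ξs) i) ^ 2) μ :=
    integrable_finsetSum _ fun i _ =>
      ((((hξL2 t).mulVec Cω).eval i).sub (memLp_const _)).integrable_sq
  have hdiss (t : ℕ) (x : Ω) : f t x ⬝ᵥ P *ᵥ f t x - η t x ⬝ᵥ P *ᵥ η t x
      + lam * ((z t x - zs) ⬝ᵥ M *ᵥ (z t x - zs))
      + ∑ i, ((Cω *ᵥ ξ t x) i - (Cω *ᵥ ξs) i) ^ 2 ≤ 0 := by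
    have hker : Fξ *ᵥ (ξ t x - ξs) + Fu *ᵥ (u t x - us) = 0 := by
      rw [mulVec_sub, mulVec_sub, sub_add_sub_comm, hinv x t, hinvs, sub_zero]
    have h := hLMI (ξ t x - ξs) (ψ t x - ψs) (u t x - us) hker
    rwa [← sub_eq_fromCols_mulVec_sumElim (hz x t) hzs, mulVec_sub Cω] at h
  have hstep (t : ℕ) := integral_le_of_dissipation_ineq hP (hηL2 t) (hfL2 t) (hwL2 t)
    (hIQCL1 t) (hωL1 t) (hfw t) (hwmean t) (hwcov t)
    (fun x => sumElim_sub_eq_fromBlocks_mulVec_add (hξ x t) (hψ x t) hξs hψs) (hdiss t)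
  have hV (t : ℕ) : 0 ≤ ∫ x, η t x ⬝ᵥ P *ᵥ η t x ∂μ :=
    integral_nonneg fun x => by simpa using hP.dotProduct_mulVec_nonneg (η t x)
  rw [← transpose_fromRows_zero_mul_mul]
  exact limsup_one_div_mul_sum_range_le
    (fun t => integral_nonneg fun x => sum_nonneg fun i _ => sq_nonneg _)
    (sum_range_le_of_le_sub_succ hV hlam (sum_range_integral_nonneg hIQCL1 hIQC) hstep)

/-- **Theorem 2 (Distributed Algorithm Sensitivity).**
Consider the noisy algorithm `ξ^{t+1} = A ξ^t + B (u^t + w^t)`, `y^t = C_y ξ^t`,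
`ω^t = C_ω ξ^t`, with invariant `F_ξ ξ^t + F_u u^t = 0`, deterministic fixed point
`(ξ*, u*, ψ*, z*)`, IQC filter `Ψ` initialized at its fixed point whose output
satisfies the hard IQC pathwise, and zero-mean, mutually independent,
square-integrable noise `w^t` with covariance bounded by `R` and independent of
`(ξ^t, ψ^t, u^t)`. If there exist a positive semidefinite `P` (with `(1,1)` block
`P₁₁`) and `λ ≥ 0` satisfying the sensitivity LMI on the nullspace of
`[F_ξ, 0, F_u]`, then
`limsup_{T→∞} (1/T) ∑_{t<T} E‖ω^t − ω*‖² ≤ tr(R Bᵀ P₁₁ B)`. -/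
theorem distributed_sensitivity
    {n n_u n_y n_w n_ψ n_z n_F : ℕ}
    (A : Matrix (Fin n) (Fin n) ℝ) (B : Matrix (Fin n) (Fin n_u) ℝ)
    (Cy : Matrix (Fin n_y) (Fin n) ℝ) (Cω : Matrix (Fin n_w) (Fin n) ℝ)
    (AΨ : Matrix (Fin n_ψ) (Fin n_ψ) ℝ)
    (BΨy : Matrix (Fin n_ψ) (Fin n_y) ℝ) (BΨu : Matrix (Fin n_ψ) (Fin n_u) ℝ)
    (CΨ : Matrix (Fin n_z) (Fin n_ψ) ℝ)
    (DΨy : Matrix (Fin n_z) (Fin n_y) ℝ) (DΨu : Matrix (Fin n_z) (Fin n_u) ℝ)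
    (M : Matrix (Fin n_z) (Fin n_z) ℝ) (hM : M.IsHermitian)
    (Fξ : Matrix (Fin n_F) (Fin n) ℝ) (Fu : Matrix (Fin n_F) (Fin n_u) ℝ)
    (R : Matrix (Fin n_u) (Fin n_u) ℝ) (hR : R.PosDef)
    -- the probability space and the noise process
    (Ω : Type*) [MeasurableSpace Ω] (μ : Measure Ω) [IsProbabilityMeasure μ]
    (w : ℕ → Ω → Fin n_u → ℝ)
    (hwmeas : ∀ t, Measurable (w t))
    (hwL2 : ∀ t, MemLp (w t) 2 μ)
    (hwindep : iIndepFun w μ)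
    (hwmean : ∀ t, ∫ x, w t x ∂μ = 0)
    (hwcov : ∀ t,
      (R - Matrix.of (fun j j' : Fin n_u => ∫ x, w t x j * w t x j' ∂μ)).PosSemidef)
    -- stochastic trajectories and deterministic fixed point
    (ξ : ℕ → Ω → Fin n → ℝ) (u : ℕ → Ω → Fin n_u → ℝ)
    (ψ : ℕ → Ω → Fin n_ψ → ℝ) (z : ℕ → Ω → Fin n_z → ℝ)
    (ξs : Fin n → ℝ) (us : Fin n_u → ℝ) (ψs : Fin n_ψ → ℝ) (zs : Fin n_z → ℝ)
    (hξmeas : ∀ t, Measurable (ξ t)) (humeas : ∀ t, Measurable (u t))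
    (hψmeas : ∀ t, Measurable (ψ t)) (hzmeas : ∀ t, Measurable (z t))
    (hξL2 : ∀ t, MemLp (ξ t) 2 μ) (huL2 : ∀ t, MemLp (u t) 2 μ)
    (hψL2 : ∀ t, MemLp (ψ t) 2 μ) (hzL2 : ∀ t, MemLp (z t) 2 μ)
    -- (i) noisy algorithm dynamics, with deterministic initial condition
    (hξ : ∀ x t, ξ (t + 1) x = A.mulVec (ξ t x) + B.mulVec (u t x + w t x))
    (hξ0 : ∃ c, ∀ x, ξ 0 x = c)
    -- (ii) IQC filter dynamics, initialized at the fixed point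
    (hψ0 : ∀ x, ψ 0 x = ψs)
    (hψ : ∀ x t, ψ (t + 1) x =
      AΨ.mulVec (ψ t x) + BΨy.mulVec (Cy.mulVec (ξ t x)) + BΨu.mulVec (u t x))
    (hz : ∀ x t, z t x =
      CΨ.mulVec (ψ t x) + DΨy.mulVec (Cy.mulVec (ξ t x)) + DΨu.mulVec (u t x))
    -- (iii) fixed-point relations
    (hξs : ξs = A.mulVec ξs + B.mulVec us)
    (hψs : ψs = AΨ.mulVec ψs + BΨy.mulVec (Cy.mulVec ξs) + BΨu.mulVec us)
    (hzs : zs = CΨ.mulVec ψs + DΨy.mulVec (Cy.mulVec ξs) + DΨu.mulVec us)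
    -- (iv) invariant
    (hinv : ∀ x t, Fξ.mulVec (ξ t x) + Fu.mulVec (u t x) = 0)
    (hinvs : Fξ.mulVec ξs + Fu.mulVec us = 0)
    -- (v) hard IQC, pathwise
    (hIQC : ∀ x, ∀ T : ℕ, 0 ≤ ∑ t ∈ Finset.range (T + 1),
      (z t x - zs) ⬝ᵥ M.mulVec (z t x - zs))
    -- (vi) `(ξ^t, ψ^t, u^t)` is independent of `w^t`
    (hindep : ∀ t, IndepFun (fun x => (ξ t x, ψ t x, u t x)) (w t) μ)
    -- LMI certificate
    (P : Matrix (Fin n ⊕ Fin n_ψ) (Fin n ⊕ Fin n_ψ) ℝ) (hP : P.PosSemidef)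
    (lam : ℝ) (hlam : 0 ≤ lam)
    (hLMI : ∀ (vξ : Fin n → ℝ) (vψ : Fin n_ψ → ℝ) (vu : Fin n_u → ℝ),
      Fξ.mulVec vξ + Fu.mulVec vu = 0 →
      letI Ahat : Matrix (Fin n ⊕ Fin n_ψ) (Fin n ⊕ Fin n_ψ) ℝ :=
        Matrix.fromBlocks A 0 (BΨy * Cy) AΨ
      letI Bhat : Matrix (Fin n ⊕ Fin n_ψ) (Fin n_u) ℝ := Matrix.fromRows B BΨu
      letI Chat : Matrix (Fin n_z) (Fin n ⊕ Fin n_ψ) ℝ :=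
        Matrix.fromCols (DΨy * Cy) CΨ
      letI v : (Fin n ⊕ Fin n_ψ) → ℝ := Sum.elim vξ vψ
      letI vnext : (Fin n ⊕ Fin n_ψ) → ℝ := Ahat.mulVec v + Bhat.mulVec vu
      letI zv : Fin n_z → ℝ := Chat.mulVec v + DΨu.mulVec vu
      vnext ⬝ᵥ P.mulVec vnext - v ⬝ᵥ P.mulVec v
        + lam * (zv ⬝ᵥ M.mulVec zv)
        + ∑ i, (Cω.mulVec vξ i) ^ 2 ≤ 0) :
    Filter.limsup
      (fun T : ℕ => (1 / (T : ℝ)) * ∑ t ∈ Finset.range T,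
        ∫ x, (∑ i, (Cω.mulVec (ξ t x) i - Cω.mulVec ξs i) ^ 2) ∂μ)
      Filter.atTop
      ≤ (R * (Bᵀ * P.toBlocks₁₁ * B)).trace :=
  distributed_sensitivity_general A B Cy Cω AΨ BΨy BΨu CΨ DΨy DΨu M Fξ Fu R Ω μ w hwL2 hwmean hwcov
    ξ u ψ z ξs us ψs zs hξL2 huL2 hψL2 hzL2 hξ hψ hz hξs hψs hzs hinv hinvs hIQC hindep P hP lam
    hlam hLMI
end

section
/- Let ρ > 0 and let V : ℕ → ℝ and q : ℕ → ℝ be sequences such that V_{t+1} − ρ²·V_t + q_t ≤ 0 for every t ∈ ℕ, and such that Σ_{t=0}^{T−1} ρ^{−2t}·q_t ≥ 0 for every T ≥ 1. Then V_T ≤ ρ^{2T}·V_0 for every T ∈ ℕ. -/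
/-- Weighted telescoping-sum argument: a per-step dissipation inequality together
with nonnegativity of the `ρ`-weighted partial sums of `q` yields geometric decay
of `V` at rate `ρ²`. -/
theorem weighted_telescoping_decay (ρ : ℝ) (hρ : 0 < ρ) (V q : ℕ → ℝ)
    (hstep : ∀ t : ℕ, V (t + 1) - ρ ^ 2 * V t + q t ≤ 0)
    (hsum : ∀ T : ℕ, 1 ≤ T → 0 ≤ ∑ t ∈ Finset.range T, (ρ ^ (2 * t))⁻¹ * q t) :
    ∀ T : ℕ, V T ≤ ρ ^ (2 * T) * V 0 := by
  have hρ2 : (0:ℝ) < ρ ^ 2 := by positivity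
  have key : ∀ T : ℕ,
      (ρ ^ (2 * T))⁻¹ * V T + (ρ ^ 2)⁻¹ * ∑ t ∈ Finset.range T, (ρ ^ (2 * t))⁻¹ * q t ≤ V 0 := by
    intro T
    induction T with
    | zero => simp
    | succ n ih =>
      have h := hstep n
      have hpow : ρ ^ (2 * (n + 1)) = ρ ^ (2 * n) * ρ ^ 2 := by ring
      have hp : (0:ℝ) < ρ ^ (2 * n) := by positivity
      have hp1 : (0:ℝ) < ρ ^ (2 * (n + 1)) := by positivity
      -- V (n+1) ≤ ρ^2 * V n - q n
      have h1 : V (n + 1) ≤ ρ ^ 2 * V n - q n := by linarith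
      have h2 : (ρ ^ (2 * (n + 1)))⁻¹ * V (n + 1)
          ≤ (ρ ^ (2 * n))⁻¹ * V n - (ρ ^ 2)⁻¹ * ((ρ ^ (2 * n))⁻¹ * q n) := by
        rw [hpow, mul_inv]
        have := mul_le_mul_of_nonneg_left h1 (le_of_lt (by positivity : (0:ℝ) < (ρ ^ (2*n))⁻¹ * (ρ ^ 2)⁻¹))
        calc (ρ ^ (2 * n))⁻¹ * (ρ ^ 2)⁻¹ * V (n + 1)
            ≤ (ρ ^ (2 * n))⁻¹ * (ρ ^ 2)⁻¹ * (ρ ^ 2 * V n - q n) := this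
          _ = (ρ ^ (2 * n))⁻¹ * (ρ ^ 2 * (ρ ^ 2)⁻¹) * V n - (ρ ^ 2)⁻¹ * ((ρ ^ (2 * n))⁻¹ * q n) := by ring
          _ = (ρ ^ (2 * n))⁻¹ * V n - (ρ ^ 2)⁻¹ * ((ρ ^ (2 * n))⁻¹ * q n) := by
              rw [mul_inv_cancel₀ (ne_of_gt hρ2)]; ring
      rw [Finset.sum_range_succ, mul_add]
      have he : 2 * (n + 1) = 2 * n + 2 * 1 := by ring
      rw [he] at h2
      linarith
  intro T
  have h := key T
  have hp : (0:ℝ) < ρ ^ (2 * T) := by positivity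
  have hsum' : 0 ≤ (ρ ^ 2)⁻¹ * ∑ t ∈ Finset.range T, (ρ ^ (2 * t))⁻¹ * q t := by
    rcases Nat.eq_zero_or_pos T with hT | hT
    · simp [hT]
    · exact mul_nonneg (by positivity) (hsum T hT)
  have h2 : (ρ ^ (2 * T))⁻¹ * V T ≤ V 0 := by linarith
  calc V T = ρ ^ (2 * T) * ((ρ ^ (2 * T))⁻¹ * V T) := by
        rw [← mul_assoc, mul_inv_cancel₀ (ne_of_gt hp), one_mul]
    _ ≤ ρ ^ (2 * T) * V 0 := by
        exact mul_le_mul_of_nonneg_left h2 (le_of_lt hp)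
end
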